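/- arXiv:1607.05350 — 12 statements merged into one kernel-verified Lean document; each statement's English description precedes it below -/
import Mathlib

section
/- Let k ≥ 2, n > k, and let G be a real k×n matrix with columns f_1,…,f_n such that G·Gᵀ = (n/k)·I and GᵀG = I + (1/α)·C, where C has zero diagonal and entries ±1 off the diagonal, and α = √(k(n-1)/(n-k)). If the integer span of f_1,…,f_n is a discrete subgroup of ℝ^k, then α is a rational number. -/
open Matrix BigOperators Module

/-- If the integer span of the columns of a unit tight equiangular (k,n) frame
is a discrete subgroup of ℝ^k, then α must be rational. -/
theorem stmt0 (k n : ℕ) (hk : 2 ≤ k) (hkn : k < n)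
    (G : Matrix (Fin k) (Fin n) ℝ) (C : Matrix (Fin n) (Fin n) ℝ)
    (hCdiag : ∀ i, C i i = 0)
    (hCoff : ∀ i j, i ≠ j → C i j = 1 ∨ C i j = -1)
    (α : ℝ) (hα : α = Real.sqrt ((k : ℝ) * ((n : ℝ) - 1) / ((n : ℝ) - (k : ℝ))))
    (hG1 : G * Gᵀ = ((n : ℝ) / (k : ℝ)) • 1)
    (hG2 : Gᵀ * G = 1 + α⁻¹ • C)
    (hdisc : ∃ ε > (0 : ℝ), ∀ c : Fin n → ℤ,
      G.mulVec (fun j => (c j : ℝ)) ≠ 0 →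
      ε ≤ ∑ i, (G.mulVec (fun j => (c j : ℝ)) i) ^ 2) :
    ∃ q : ℚ, α = (q : ℝ) := by
  classical
  have hkpos : (0:ℝ) < (k:ℝ) := by
    have : (0:ℕ) < k := by omega
    exact_mod_cast this
  have hnkpos : (0:ℝ) < (n:ℝ) - (k:ℝ) := by
    have : (k:ℝ) < (n:ℝ) := by exact_mod_cast hkn
    linarith
  have hn1 : (0:ℝ) < (n:ℝ) - 1 := by
    have : (1:ℕ) < n := by omega
    have : (1:ℝ) < (n:ℝ) := by exact_mod_cast this
    linarith
  have hαpos : 0 < α := by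
    rw [hα]
    exact Real.sqrt_pos.mpr (div_pos (mul_pos hkpos hn1) hnkpos)
  -- the ℤ-linear map sending integer coefficients to the lattice vector
  let φ : (Fin n → ℤ) →ₗ[ℤ] (Fin k → ℝ) :=
    { toFun := fun c => G.mulVec (fun j => (c j : ℝ))
      map_add' := by
        intro a b
        show G.mulVec (fun j => (((a + b) j : ℤ) : ℝ)) =
          G.mulVec (fun j => ((a j : ℤ) : ℝ)) + G.mulVec (fun j => ((b j : ℤ) : ℝ))
        have h : (fun j => (((a + b) j : ℤ) : ℝ)) =
            (fun j => ((a j : ℤ) : ℝ)) + (fun j => ((b j : ℤ) : ℝ)) :=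
          funext fun j => by simp
        rw [h, Matrix.mulVec_add]
      map_smul' := by
        intro z a
        show G.mulVec (fun j => (((z • a) j : ℤ) : ℝ)) =
          z • G.mulVec (fun j => ((a j : ℤ) : ℝ))
        have h : (fun j => (((z • a) j : ℤ) : ℝ)) =
            (z : ℝ) • (fun j => ((a j : ℤ) : ℝ)) :=
          funext fun j => by simp
        rw [h, Matrix.mulVec_smul]
        exact Int.cast_smul_eq_zsmul ℝ z _ }
  -- Key step : there is a nonzero integer vector in the kernel of G
  obtain ⟨c, hc0, hcker⟩ :
      ∃ c : Fin n → ℤ, c ≠ 0 ∧ G.mulVec (fun j => ((c j : ℤ) : ℝ)) = 0 := by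
    by_contra hno
    push_neg at hno
    have hinj : Function.Injective φ := by
      rw [← LinearMap.ker_eq_bot, LinearMap.ker_eq_bot']
      intro x hx
      by_contra hx0
      exact hno x hx0 hx
    set L : Submodule ℤ (Fin k → ℝ) := LinearMap.range φ with hL
    obtain ⟨ε, hε, hsep⟩ := hdisc
    have hsqrtpos : 0 < Real.sqrt (ε / k) :=
      Real.sqrt_pos.mpr (div_pos hε hkpos)
    have hLsep : ∀ x : Fin k → ℝ, x ∈ L → x ≠ 0 → Real.sqrt (ε / k) ≤ ‖x‖ := by
      rintro x ⟨c', rfl⟩ hx0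
      have h1 : ε ≤ ∑ i, (φ c' i) ^ 2 := hsep c' hx0
      have h2 : ∑ i, (φ c' i) ^ 2 ≤ (k : ℝ) * ‖φ c'‖ ^ 2 := by
        calc ∑ i, (φ c' i) ^ 2 ≤ ∑ _i : Fin k, ‖φ c'‖ ^ 2 := by
              refine Finset.sum_le_sum fun i _ => ?_
              have h := norm_le_pi_norm (φ c') i
              have h' : |φ c' i| ≤ ‖φ c'‖ := by simpa [Real.norm_eq_abs] using h
              nlinarith [abs_nonneg (φ c' i), sq_abs (φ c' i)]
          _ = (k : ℝ) * ‖φ c'‖ ^ 2 := by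
              simp [Finset.sum_const, Finset.card_univ]
      have h3 : ε / k ≤ ‖φ c'‖ ^ 2 := by
        rw [div_le_iff₀ hkpos]
        nlinarith
      calc Real.sqrt (ε / k) ≤ Real.sqrt (‖φ c'‖ ^ 2) := Real.sqrt_le_sqrt h3
        _ = ‖φ c'‖ := Real.sqrt_sq (norm_nonneg _)
    haveI hdt : DiscreteTopology L := by
      refine discreteTopology_iff_isOpen_singleton_zero.mpr ?_
      rw [isOpen_induced_iff]
      refine ⟨Metric.ball 0 (Real.sqrt (ε / k)), Metric.isOpen_ball, ?_⟩
      ext x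
      simp only [Set.mem_preimage, Metric.mem_ball, dist_zero_right, Set.mem_singleton_iff]
      constructor
      · intro hx
        by_contra hx0
        have hxv : (x : Fin k → ℝ) ≠ 0 := fun h => hx0 (Subtype.ext h)
        exact absurd hx (not_lt.mpr (hLsep x x.2 hxv))
      · intro hx
        rw [hx]
        simpa using hsqrtpos
    -- L is a lattice of rank ≤ k
    set V : Submodule ℝ (Fin k → ℝ) := Submodule.span ℝ (L : Set (Fin k → ℝ)) with hV
    set f : V →ₗ[ℝ] (Fin k → ℝ) := V.subtype with hf
    set L₀ : Submodule ℤ V := L.comap (f.restrictScalars ℤ) with hL₀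
    have h_img : f '' L₀ = L := by
      rw [← LinearMap.coe_restrictScalars ℤ f, ← Submodule.map_coe (f.restrictScalars ℤ),
        Submodule.map_comap_eq_self]
      exact fun x hx => LinearMap.mem_range.mpr ⟨⟨x, Submodule.subset_span hx⟩, rfl⟩
    have h_img' : L₀.map (f.restrictScalars ℤ) = L := SetLike.ext'_iff.mpr h_img
    haveI hdt₀ : DiscreteTopology L₀ := by
      refine DiscreteTopology.preimage_of_continuous_injective (L : Set (Fin k → ℝ)) ?_
        (Submodule.injective_subtype V)
      exact LinearMap.continuous_of_finiteDimensional f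
    haveI : IsZLattice ℝ L₀ := ⟨by
      rw [← (Submodule.map_injective_of_injective (Submodule.injective_subtype V)).eq_iff,
        Submodule.map_span, Submodule.map_top, Submodule.range_subtype, h_img]⟩
    have hrank : finrank ℤ L = finrank ℝ V := by
      rw [← ZLattice.rank ℝ L₀]
      have e : L₀ ≃ₗ[ℤ] L :=
        (Submodule.equivMapOfInjective (f.restrictScalars ℤ)
          (Submodule.injective_subtype V) L₀).trans (LinearEquiv.ofEq _ _ h_img')
      exact e.finrank_eq.symm
    have hLk : finrank ℤ L ≤ k := by
      rw [hrank]
      have h := Submodule.finrank_le V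
      simpa [Module.finrank_pi] using h
    have hLn : finrank ℤ L = n := by
      have e : (Fin n → ℤ) ≃ₗ[ℤ] L := LinearEquiv.ofInjective φ hinj
      rw [← e.finrank_eq, Module.finrank_pi]
      simp
    omega
  -- From the kernel relation, α c = -C c, so α is rational
  set cr : Fin n → ℝ := fun j => ((c j : ℤ) : ℝ) with hcr
  have hrel : (0 : Fin n → ℝ) = cr + α⁻¹ • C.mulVec cr := by
    have h0 : Gᵀ.mulVec (G.mulVec cr) = 0 := by rw [hcker, Matrix.mulVec_zero]
    calc (0 : Fin n → ℝ) = Gᵀ.mulVec (G.mulVec cr) := h0.symm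
      _ = (Gᵀ * G).mulVec cr := Matrix.mulVec_mulVec cr Gᵀ G
      _ = cr + α⁻¹ • C.mulVec cr := by
          rw [hG2, Matrix.add_mulVec, Matrix.one_mulVec, Matrix.smul_mulVec]
  obtain ⟨i, hci⟩ : ∃ i, c i ≠ 0 := by
    by_contra h
    push_neg at h
    exact hc0 (funext h)
  have hi : (0 : ℝ) = cr i + α⁻¹ * C.mulVec cr i := by
    have := congrFun hrel i
    simpa using this
  -- C.mulVec cr i is an integer
  set d : Fin n → ℤ := fun j => if C i j = 1 then c j else if C i j = -1 then -c j else 0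
    with hd
  have hCint : C.mulVec cr i = ((∑ j, d j : ℤ) : ℝ) := by
    rw [Matrix.mulVec, dotProduct]
    push_cast
    refine Finset.sum_congr rfl fun j _ => ?_
    by_cases hij : i = j
    · subst hij
      simp [hd, hCdiag i]
    · have hcrj : cr j = ((c j : ℤ) : ℝ) := rfl
      rcases hCoff i j hij with h1 | h1
      · have hdj : d j = c j := by simp [hd, h1]
        rw [hdj, h1, one_mul, hcrj]
      · have hne : C i j ≠ 1 := by rw [h1]; norm_num
        have hdj : d j = -c j := by
          simp only [hd]
          rw [if_neg hne, if_pos h1]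
        rw [hdj, h1, hcrj]
        push_cast
        ring
  set m : ℤ := ∑ j, d j with hm
  have hαeq : α * (c i : ℝ) = -(m : ℝ) := by
    have hα0 : α ≠ 0 := ne_of_gt hαpos
    rw [hCint] at hi
    have : α * (0 : ℝ) = α * (cr i + α⁻¹ * (m : ℝ)) := by rw [← hi]
    rw [mul_zero, mul_add, ← mul_assoc, mul_inv_cancel₀ hα0, one_mul] at this
    have : α * cr i = -(m : ℝ) := by linarith
    simpa [hcr] using this
  refine ⟨(-m : ℚ) / (c i : ℚ), ?_⟩
  have hci' : ((c i : ℤ) : ℝ) ≠ 0 := Int.cast_ne_zero.mpr hci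
  push_cast
  rw [eq_div_iff hci']
  exact hαeq
end

section
/- Let G = (G₀ G₁) be a real k×n matrix of rank k (columns partitioned so that G₀ is an invertible k×k matrix). Then the integer span of the columns of G is a discrete additive subgroup of ℝ^k if and only if there exist a nonzero integer β and an integer k×(n−k) matrix X with G₀⁻¹G₁ = (1/β)X. -/
/-!
With `A = G₀⁻¹ G₁`, the lattice is the image under the invertible map `G₀` of
`{c + A d : c ∈ ℤᵏ, d ∈ ℤᵐ}`, and an invertible linear map distorts squared norms by at most a constant factor, so only
this reduced lattice matters. If `β A` is integral, then `β (c + A d)` is an integer vector, hence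
either zero or of squared norm at least `1`. Conversely, by pigeonhole on the fractional parts of
the multiples `N A` there are `N₁ ≠ N₂` with `N₁ A` and `N₂ A` arbitrarily close modulo `ℤ`; each
column of `(N₂ - N₁) A` then differs from an integer vector by a short lattice vector, which must
vanish, so `β = N₂ - N₁` works.
-/

open Matrix

section
variable {α n o : Type*} [Fintype n] [Fintype o]

def IsBoundedAwayFromZero (f : α → n → ℝ) : Prop :=
  ∃ ε > 0, ∀ a, f a ≠ 0 → ε ≤ ∑ i, f a i ^ 2

theorem sum_sq_mulVec_le (M : Matrix n o ℝ) (v : o → ℝ) :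
    ∑ i, (M *ᵥ v) i ^ 2 ≤ (∑ i, ∑ j, M i j ^ 2) * ∑ j, v j ^ 2 := by
  rw [Finset.sum_mul]
  exact Finset.sum_le_sum fun i _ => Finset.sum_mul_sq_le_sq_mul_sq _ (M i) v

theorem IsBoundedAwayFromZero.mulVec [DecidableEq o] {f : α → o → ℝ} (hf : IsBoundedAwayFromZero f)
    {M : Matrix n o ℝ} {N : Matrix o n ℝ} (hNM : N * M = 1) :
    IsBoundedAwayFromZero fun a => M *ᵥ f a := by
  obtain ⟨ε, hε, hgap⟩ := hf
  set C := ∑ i, ∑ j, N i j ^ 2 + 1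
  have hC : 0 < C := by positivity
  refine ⟨ε / C, by positivity, fun a ha => ?_⟩
  have hfa : f a ≠ 0 := fun h => ha (by simp only [h, mulVec_zero])
  rw [div_le_iff₀' hC]
  calc ε ≤ ∑ i, f a i ^ 2 := hgap a hfa
    _ = ∑ i, (N *ᵥ (M *ᵥ f a)) i ^ 2 := by rw [mulVec_mulVec, hNM, one_mulVec]
    _ ≤ (∑ i, ∑ j, N i j ^ 2) * ∑ i, (M *ᵥ f a) i ^ 2 := sum_sq_mulVec_le N _
    _ ≤ C * ∑ i, (M *ᵥ f a) i ^ 2 := by gcongr; linarith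

theorem isBoundedAwayFromZero_mulVec_iff [DecidableEq n] {f : α → n → ℝ} {M : Matrix n n ℝ}
    (hM : IsUnit M.det) :
    (IsBoundedAwayFromZero fun a => M *ᵥ f a) ↔ IsBoundedAwayFromZero f := by
  refine ⟨fun h => ?_, fun h => h.mulVec (nonsing_inv_mul M hM)⟩
  simpa [mulVec_mulVec, nonsing_inv_mul M hM] using h.mulVec (mul_nonsing_inv M hM)

theorem IsBoundedAwayFromZero.exists_eq_zero_of_forall_abs_lt {f : α → n → ℝ}
    (hf : IsBoundedAwayFromZero f) :
    ∃ δ > 0, ∀ a, (∀ i, |f a i| < δ) → f a = 0 := by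
  obtain ⟨ε, hε, hgap⟩ := hf
  have hε' : 0 < ε / (Fintype.card n + 1) := by positivity
  refine ⟨√(ε / (Fintype.card n + 1)), Real.sqrt_pos.2 hε', fun a hsmall => ?_⟩
  by_contra ha
  have hsq : ∀ i, f a i ^ 2 ≤ ε / (Fintype.card n + 1) := fun i => by
    rw [← Real.sq_sqrt hε'.le, ← sq_abs]
    exact pow_le_pow_left₀ (abs_nonneg _) (hsmall i).le 2
  have : ∑ i, f a i ^ 2 < ε := calc
    ∑ i, f a i ^ 2 ≤ Fintype.card n * (ε / (Fintype.card n + 1)) := by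
      simpa using Finset.sum_le_sum fun i (_ : i ∈ Finset.univ) => hsq i
    _ < ε := by
      rw [mul_div_assoc', div_lt_iff₀ (by positivity)]
      linarith
  exact (hgap a ha).not_gt this

end

theorem exists_ne_forall_abs_fract_sub_lt {ι : Type*} [Finite ι] (x : ι → ℝ) {δ : ℝ}
    (hδ : 0 < δ) :
    ∃ N₁ N₂ : ℕ, N₁ ≠ N₂ ∧ ∀ i, |Int.fract (N₂ * x i) - Int.fract (N₁ * x i)| < δ := by
  let cell : ℕ → ι → ℤ := fun N i => ⌊Int.fract (N * x i) / δ⌋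
  have hcell : Set.MapsTo cell Set.univ (Set.univ.pi fun _ => Set.Icc 0 ⌈δ⁻¹⌉) :=
    fun N _ i _ => ⟨Int.floor_nonneg.2 (by have := Int.fract_nonneg (N * x i); positivity),
      Int.floor_le_ceil _ |>.trans' (Int.floor_le_floor <| by
        rw [div_eq_mul_inv]
        exact mul_le_of_le_one_left (by positivity) (Int.fract_lt_one _).le)⟩
  obtain ⟨N₁, -, N₂, -, hne, heq⟩ := Set.infinite_univ.exists_ne_map_eq_of_mapsTo hcell
    (Set.Finite.pi fun _ => Set.finite_Icc _ _)
  refine ⟨N₁, N₂, hne, fun i => ?_⟩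
  have := Int.abs_sub_lt_one_of_floor_eq_floor (congrFun heq i).symm
  rwa [← sub_div, abs_div, abs_of_pos hδ, div_lt_one hδ] at this

section
variable {n n' m : Type*} [Fintype n'] [Fintype m]

def intColumnCombination (G₀ : Matrix n n' ℝ) (G₁ : Matrix n m ℝ) (p : (n' → ℤ) × (m → ℤ)) :
    n → ℝ :=
  G₀ *ᵥ (fun i => (p.1 i : ℝ)) + G₁ *ᵥ (fun j => (p.2 j : ℝ))

theorem intColumnCombination_eq_mulVec [Fintype n] [DecidableEq n] {G₀ : Matrix n n ℝ}
    (hG₀ : IsUnit G₀.det) (G₁ : Matrix n m ℝ) (p : (n → ℤ) × (m → ℤ)) :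
    intColumnCombination G₀ G₁ p =
      G₀ *ᵥ intColumnCombination (1 : Matrix n n ℝ) (G₀⁻¹ * G₁) p := by
  rw [intColumnCombination, intColumnCombination, one_mulVec, mulVec_add, mulVec_mulVec,
    mul_nonsing_inv_cancel_left _ _ hG₀]

theorem intColumnCombination_one_single_apply [Fintype n] [DecidableEq n] [DecidableEq m]
    (A : Matrix n m ℝ) (c : n → ℤ) (j : m) (t : ℤ) (i : n) :
    intColumnCombination (1 : Matrix n n ℝ) A (c, Pi.single j t) i = c i + A i j * t := by
  simp [intColumnCombination, mulVec, dotProduct, Pi.single_apply]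

theorem isBoundedAwayFromZero_intColumnCombination_of_eq_inv_smul [Fintype n] [DecidableEq n]
    {A : Matrix n m ℝ} {β : ℤ} (hβ : β ≠ 0) {X : Matrix n m ℤ}
    (hA : A = (β : ℝ)⁻¹ • X.map (Int.cast : ℤ → ℝ)) :
    IsBoundedAwayFromZero (intColumnCombination (1 : Matrix n n ℝ) A) := by
  have hβ' : (β : ℝ) ≠ 0 := Int.cast_ne_zero.2 hβ
  refine ⟨((β : ℝ) ^ 2)⁻¹, by positivity, fun ⟨c, d⟩ hv => ?_⟩
  set v := intColumnCombination (1 : Matrix n n ℝ) A (c, d)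
  have hβv : ∀ i, (β : ℝ) * v i = ((β * c i + ∑ j, X i j * d j : ℤ) : ℝ) := fun i => by
    simp only [v, intColumnCombination, hA, one_mulVec, Pi.add_apply, mulVec, dotProduct,
      Matrix.smul_apply, map_apply, smul_eq_mul, mul_add, Finset.mul_sum]
    push_cast
    congr 1
    exact Finset.sum_congr rfl fun j _ => by field_simp
  obtain ⟨i, hi⟩ := Function.ne_iff.1 hv
  have hz : β * c i + ∑ j, X i j * d j ≠ 0 := by
    exact_mod_cast hβv i ▸ mul_ne_zero hβ' hi
  have hone : (1 : ℝ) ≤ ((β : ℝ) * v i) ^ 2 := by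
    rw [hβv]
    exact mod_cast (one_le_sq_iff_one_le_abs _).2 (Int.one_le_abs hz)
  calc ((β : ℝ) ^ 2)⁻¹ ≤ ((β : ℝ) ^ 2)⁻¹ * ((β : ℝ) * v i) ^ 2 :=
        le_mul_of_one_le_right (by positivity) hone
    _ = v i ^ 2 := by field_simp
    _ ≤ ∑ j, v j ^ 2 := Finset.single_le_sum (fun j _ => sq_nonneg (v j)) (Finset.mem_univ i)

theorem IsBoundedAwayFromZero.exists_eq_inv_smul [Fintype n] [DecidableEq n] [DecidableEq m]
    {A : Matrix n m ℝ}
    (hA : IsBoundedAwayFromZero (intColumnCombination (1 : Matrix n n ℝ) A)) :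
    ∃ (β : ℤ) (X : Matrix n m ℤ), β ≠ 0 ∧ A = (β : ℝ)⁻¹ • X.map (Int.cast : ℤ → ℝ) := by
  obtain ⟨δ, hδ, hsmall⟩ := hA.exists_eq_zero_of_forall_abs_lt
  obtain ⟨N₁, N₂, hne, hclose⟩ := exists_ne_forall_abs_fract_sub_lt (fun p : n × m => A p.1 p.2) hδ
  have hβ : (((N₂ : ℤ) - N₁ : ℤ) : ℝ) ≠ 0 := by
    push_cast
    exact sub_ne_zero.2 (by exact_mod_cast hne.symm)
  refine ⟨N₂ - N₁, of fun i j => ⌊N₂ * A i j⌋ - ⌊N₁ * A i j⌋, by exact_mod_cast hβ, ?_⟩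
  ext i j
  have hcol : intColumnCombination (1 : Matrix n n ℝ) A
      (fun i => ⌊N₁ * A i j⌋ - ⌊N₂ * A i j⌋, Pi.single j ((N₂ : ℤ) - N₁)) =
      fun i => Int.fract (N₂ * A i j) - Int.fract (N₁ * A i j) := by
    ext i
    rw [intColumnCombination_one_single_apply]
    unfold Int.fract
    push_cast
    ring
  have := congrFun (hsmall _ (by rw [hcol]; exact fun i => hclose (i, j))) i
  rw [hcol, Pi.zero_apply] at this
  unfold Int.fract at this
  rw [Matrix.smul_apply, map_apply, of_apply, smul_eq_mul, eq_inv_mul_iff_mul_eq₀ hβ]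
  push_cast
  linarith

theorem isBoundedAwayFromZero_intColumnCombination_one_iff [Fintype n] [DecidableEq n]
    [DecidableEq m] (A : Matrix n m ℝ) :
    IsBoundedAwayFromZero (intColumnCombination (1 : Matrix n n ℝ) A) ↔
      ∃ (β : ℤ) (X : Matrix n m ℤ), β ≠ 0 ∧ A = (β : ℝ)⁻¹ • X.map (Int.cast : ℤ → ℝ) :=
  ⟨IsBoundedAwayFromZero.exists_eq_inv_smul, fun ⟨_, _, hβ, hA⟩ =>
    isBoundedAwayFromZero_intColumnCombination_of_eq_inv_smul hβ hA⟩

end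

/-- Λ(G) for G = (G₀ G₁) with G₀ invertible is discrete iff
G₀⁻¹G₁ = (1/β)X for a nonzero integer β and an integer matrix X. -/
theorem stmt1 (k m : ℕ) (G₀ : Matrix (Fin k) (Fin k) ℝ)
    (G₁ : Matrix (Fin k) (Fin m) ℝ) (hG₀ : IsUnit G₀.det) :
    (∃ ε > (0 : ℝ), ∀ (c : Fin k → ℤ) (d : Fin m → ℤ),
        G₀.mulVec (fun i => (c i : ℝ)) + G₁.mulVec (fun i => (d i : ℝ)) ≠ 0 →
        ε ≤ ∑ i, (G₀.mulVec (fun i => (c i : ℝ)) + G₁.mulVec (fun i => (d i : ℝ))) i ^ 2)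
      ↔ ∃ (β : ℤ) (X : Matrix (Fin k) (Fin m) ℤ), β ≠ 0 ∧
          G₀⁻¹ * G₁ = ((β : ℝ))⁻¹ • X.map (Int.cast : ℤ → ℝ) := by
  calc _ ↔ IsBoundedAwayFromZero (intColumnCombination G₀ G₁) := by
        simp only [IsBoundedAwayFromZero, intColumnCombination, Prod.forall]
    _ ↔ IsBoundedAwayFromZero fun p => G₀ *ᵥ intColumnCombination 1 (G₀⁻¹ * G₁) p := by
        rw [funext (intColumnCombination_eq_mulVec hG₀ G₁)]
    _ ↔ IsBoundedAwayFromZero (intColumnCombination 1 (G₀⁻¹ * G₁)) :=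
        isBoundedAwayFromZero_mulVec_iff hG₀
    _ ↔ _ := isBoundedAwayFromZero_intColumnCombination_one_iff _
end

section
/- For every integer k ≥ 2 and all integers x_1,…,x_k, not all zero: (k+1)(x_1² + ⋯ + x_k²) ≥ k + (x_1 + ⋯ + x_k)². -/
open BigOperators

/-- For k ≥ 2 and integers x₁,…,x_k not all zero:
(k+1)(x₁+⋯+x_k²) ≥ k + (x₁+⋯+x_k)². -/
theorem stmt4 (k : ℕ) (hk : 2 ≤ k) (x : Fin k → ℤ) (hx : x ≠ 0) :
    ((k : ℤ) + 1) * ∑ i, x i ^ 2 ≥ (k : ℤ) + (∑ i, x i) ^ 2 := by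
  classical
  set s : Finset (Fin k) := Finset.univ.filter (fun i => x i ≠ 0) with hs
  have hSsum : ∑ i, x i = ∑ i ∈ s, x i := by
    rw [hs, Finset.sum_filter_ne_zero]
  have hQsum : ∑ i, x i ^ 2 = ∑ i ∈ s, x i ^ 2 := by
    refine (Finset.sum_subset (Finset.subset_univ s) ?_).symm
    intro i _ hi
    simp [hs] at hi
    simp [hi]
  -- Cauchy-Schwarz on s
  have hCS : (∑ i ∈ s, x i) ^ 2 ≤ (s.card : ℤ) * ∑ i ∈ s, x i ^ 2 := by
    have h := Finset.sum_mul_sq_le_sq_mul_sq s (fun _ => (1 : ℤ)) (fun i => x i)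
    simp only [one_mul, one_pow] at h
    calc (∑ i ∈ s, x i) ^ 2 ≤ (∑ _i ∈ s, (1:ℤ)) * ∑ i ∈ s, x i ^ 2 := h
      _ = (s.card : ℤ) * ∑ i ∈ s, x i ^ 2 := by simp
  -- each nonzero square is ≥ 1
  have hQge : (s.card : ℤ) ≤ ∑ i ∈ s, x i ^ 2 := by
    calc (s.card : ℤ) = ∑ i ∈ s, (1 : ℤ) := by simp
    _ ≤ ∑ i ∈ s, x i ^ 2 := by
        refine Finset.sum_le_sum ?_
        intro i hi
        have hxi : x i ≠ 0 := by simpa [hs] using hi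
        have : 1 ≤ |x i| := Int.one_le_abs (by simpa using hxi)
        nlinarith [sq_abs (x i)]
  have hm1 : 1 ≤ s.card := by
    rcases Function.ne_iff.mp hx with ⟨i, hi⟩
    have : i ∈ s := by simp [hs]; exact hi
    exact Finset.card_pos.mpr ⟨i, this⟩
  have hmk : s.card ≤ k := by
    simpa using Finset.card_le_card (Finset.subset_univ s)
  have hm1' : (1 : ℤ) ≤ (s.card : ℤ) := by exact_mod_cast hm1
  have hmk' : (s.card : ℤ) ≤ (k : ℤ) := by exact_mod_cast hmk
  rw [hSsum, hQsum]
  nlinarith [mul_nonneg (sub_nonneg.mpr hm1') (sub_nonneg.mpr hmk'),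
    mul_le_mul_of_nonneg_left hQge (by linarith : (0:ℤ) ≤ (k:ℤ) + 1 - s.card)]
end

section
/- For every integer k ≥ 2 and integers x_1,…,x_k not all zero, equality (k+1)(x_1²+⋯+x_k²) = k + (x_1+⋯+x_k)² holds if and only if either (x_1,…,x_k) = ±(1,…,1) or exactly one x_j equals ±1 and all other x_i are 0. -/
open BigOperators

set_option maxHeartbeats 1000000 in
/-- Equality characterization in the inequality
(k+1)(x₁²+⋯+x_k²) ≥ k + (x₁+⋯+x_k)². -/
theorem stmt5 (k : ℕ) (hk : 2 ≤ k) (x : Fin k → ℤ) (hx : x ≠ 0) :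
    ((k : ℤ) + 1) * ∑ i, x i ^ 2 = (k : ℤ) + (∑ i, x i) ^ 2 ↔
      ((∀ i, x i = 1) ∨ (∀ i, x i = -1) ∨
        ∃ j, (x j = 1 ∨ x j = -1) ∧ ∀ i, i ≠ j → x i = 0) := by
  have hkpos : (0:ℤ) < (k:ℤ) := by exact_mod_cast lt_of_lt_of_le (by norm_num) hk
  constructor
  · intro h
    classical
    set A : Finset (Fin k) := Finset.univ.filter (fun i => x i ≠ 0) with hA
    have hAne : A.Nonempty := by
      rcases Function.ne_iff.mp hx with ⟨i, hi⟩
      refine ⟨i, ?_⟩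
      simp only [hA, Finset.mem_filter, Finset.mem_univ, true_and]
      simpa using hi
    set m : ℕ := A.card with hm
    have hmem : ∀ i, i ∈ A ↔ x i ≠ 0 := by intro i; simp [hA]
    have hs : ∑ i ∈ A, x i = ∑ i, x i := Finset.sum_filter_ne_zero _
    have hq : ∑ i ∈ A, x i ^ 2 = ∑ i, x i ^ 2 := by
      apply Finset.sum_subset (Finset.subset_univ _)
      intro i _ hi
      have : x i = 0 := by simpa [hA] using hi
      simp [this]
    have hq_ge : (m:ℤ) ≤ ∑ i ∈ A, x i ^ 2 := by
      have : ∑ _i ∈ A, (1:ℤ) ≤ ∑ i ∈ A, x i ^ 2 := by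
        apply Finset.sum_le_sum
        intro i hi
        have hxi : x i ≠ 0 := (hmem i).mp hi
        nlinarith [sq_nonneg (x i), Int.one_le_abs hxi, sq_abs (x i), sq_nonneg (|x i| - 1)]
      simpa using this
    have cs : (∑ i ∈ A, x i)^2 ≤ (m:ℤ) * ∑ i ∈ A, x i ^ 2 := by
      have := Finset.sum_mul_sq_le_sq_mul_sq A (fun _ => (1:ℤ)) x
      simpa using this
    have hmk : m ≤ k := by
      have := Finset.card_le_univ A
      simpa using this
    -- key inequality : ((k:ℤ)+1-m) * q ≤ k
    rw [← hs, ← hq] at h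
    have hkey : ((k:ℤ) + 1 - m) * (∑ i ∈ A, x i ^ 2) ≤ (k:ℤ) := by
      nlinarith [cs]
    have hm1 : (1:ℤ) ≤ (m:ℤ) := by
      exact_mod_cast Nat.one_le_iff_ne_zero.mpr (Finset.card_ne_zero_of_mem hAne.choose_spec)
    have hmkZ : (m:ℤ) ≤ (k:ℤ) := by exact_mod_cast hmk
    have hcases : (m:ℤ) = 1 ∨ (m:ℤ) = (k:ℤ) := by
      by_contra hc
      push_neg at hc
      have h1 : (2:ℤ) ≤ (m:ℤ) := by omega
      have h2 : (m:ℤ) ≤ (k:ℤ) - 1 := by omega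
      nlinarith [hq_ge, hkey]
    rcases hcases with hcase | hcase
    · -- exactly one nonzero coordinate
      right; right
      have hm1' : m = 1 := by exact_mod_cast hcase
      rcases Finset.card_eq_one.mp hm1' with ⟨j, hj⟩
      have hxj0 : x j ≠ 0 := (hmem j).mp (by simp [hj])
      have hzero : ∀ i, i ≠ j → x i = 0 := by
        intro i hij
        by_contra hne
        have : i ∈ A := (hmem i).mpr hne
        rw [hj] at this
        exact hij (Finset.mem_singleton.mp this)
      rw [hj] at h
      simp only [Finset.sum_singleton] at h
      have hsq : x j ^ 2 = 1 := by nlinarith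
      have : (x j - 1) * (x j + 1) = 0 := by nlinarith
      rcases mul_eq_zero.mp this with h' | h'
      · exact ⟨j, Or.inl (by linarith), hzero⟩
      · exact ⟨j, Or.inr (by linarith), hzero⟩
    · -- all coordinates nonzero
      have hmkN : m = k := by exact_mod_cast hcase
      have hqk : ∑ i ∈ A, x i ^ 2 = (k:ℤ) := by
        rw [hcase] at hkey hq_ge
        nlinarith [hkey, hq_ge]
      have hsq1 : ∀ i ∈ A, x i ^ 2 = 1 := by
        have hle : ∀ i ∈ A, (1:ℤ) ≤ x i ^ 2 := by
          intro i hi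
          have hxi : x i ≠ 0 := (hmem i).mp hi
          nlinarith [Int.one_le_abs hxi, sq_abs (x i), sq_nonneg (|x i| - 1)]
        have hcard : ((A.card : ℤ)) = (k:ℤ) := hcase
        have := (Finset.sum_eq_sum_iff_of_le hle).mp
          (by rw [hqk]; simp [Finset.sum_const, hcard])
        intro i hi; exact (this i hi).symm
      have hAuniv : A = Finset.univ :=
        Finset.eq_univ_of_card A (by simpa [Finset.card_univ] using hmkN)
      have hss : (∑ i ∈ A, x i) ^ 2 = (k:ℤ)^2 := by
        linear_combination (-1 : ℤ) * h + ((k:ℤ)+1) * hqk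
      have : ((∑ i ∈ A, x i) - k) * ((∑ i ∈ A, x i) + k) = 0 := by
        linear_combination hss
      rcases mul_eq_zero.mp this with h' | h'
      · left
        have hsk : ∑ i ∈ A, x i = (k:ℤ) := by linarith
        have hle : ∀ i ∈ A, x i ≤ 1 := by
          intro i hi
          nlinarith [hsq1 i hi]
        have hcard : ((A.card : ℤ)) = (k:ℤ) := hcase
        have heq := (Finset.sum_eq_sum_iff_of_le hle).mp
          (by rw [hsk]; simp [Finset.sum_const, hcard])
        intro i
        have hiA : i ∈ A := by rw [hAuniv]; exact Finset.mem_univ i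
        exact heq i hiA
      · right; left
        have hsk : ∑ i ∈ A, x i = -(k:ℤ) := by linarith
        have hle : ∀ i ∈ A, (-1:ℤ) ≤ x i := by
          intro i hi
          nlinarith [hsq1 i hi]
        have hcard : ((A.card : ℤ)) = (k:ℤ) := hcase
        have heq := (Finset.sum_eq_sum_iff_of_le hle).mp
          (by rw [hsk]; simp [Finset.sum_const, hcard])
        intro i
        have hiA : i ∈ A := by rw [hAuniv]; exact Finset.mem_univ i
        exact (heq i hiA).symm
  · rintro (h1 | h1 | ⟨j, hj, hz⟩)
    · simp [h1, Finset.card_univ]; ring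
    · simp [h1, Finset.card_univ]; ring
    · have hsums : ∑ i, x i = x j := Finset.sum_eq_single j (fun i _ hij => hz i hij) (by simp)
      have hsumq : ∑ i, x i ^ 2 = x j ^ 2 := Finset.sum_eq_single j (fun i _ hij => by simp [hz i hij]) (by simp)
      rcases hj with hj | hj <;> rw [hsums, hsumq, hj] <;> ring
end

section
/- Let B be the (k+1)×k matrix whose columns are the vectors f_1,…,f_k with (f_j)_i = 1/√(k²+k) for i ≠ j and (f_j)_j = −k/√(k²+k). Then det(BᵀB) = (k+1)^{k-1}/k^k. -/
/-!
Write `J` for an all-ones matrix and `s = √(k² + k)`. Then `B = s⁻¹ (J - (k + 1) E)`, where the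
columns of `E` are the first `k` standard basis vectors of `ℝᵏ⁺¹`. Since `EᵀE = 1` and
`EᵀJ = JᵀE = J`, `JᵀJ = (k + 1) J`, the Gram matrix is `BᵀB = k⁻¹ ((k + 1) I - J)`. The matrix
`(k + 1) I - J` is a rank-one perturbation of a scalar matrix (the reduced Laplacian of the complete
graph on `k + 1` vertices), and the matrix determinant lemma gives `det = (k + 1)ᵏ⁻¹`.
-/

open Matrix BigOperators

namespace Matrix

theorem transpose_mul_self_allOnes_sub_smul_submatrix_one {m n R : Type*} [Fintype m]
    [DecidableEq m] [DecidableEq n] [CommRing R] {f : n → m} (hf : Function.Injective f) (c : R) :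
    (of (fun _ _ => 1) - c • (1 : Matrix m m R).submatrix id f)ᵀ *
        (of (fun _ _ => 1) - c • (1 : Matrix m m R).submatrix id f) =
      c ^ 2 • 1 + ((Fintype.card m : R) - 2 * c) • of fun _ _ => 1 := by
  set J : Matrix m n R := of fun _ _ => 1
  set Jₙ : Matrix n n R := of fun _ _ => 1
  set E : Matrix m n R := (1 : Matrix m m R).submatrix id f
  have hJJ : Jᵀ * J = (Fintype.card m : R) • Jₙ := by ext; simp [J, Jₙ, mul_apply]
  have hEJ : Eᵀ * J = Jₙ := by ext; simp [E, J, Jₙ, mul_apply, one_apply]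
  have hJE : Jᵀ * E = Jₙ := by ext; simp [E, J, Jₙ, mul_apply, one_apply]
  have hEE : Eᵀ * E = 1 := by ext; simp [E, mul_apply, one_apply, hf.eq_iff]
  simp only [transpose_sub, transpose_smul, Matrix.sub_mul, Matrix.mul_sub, Matrix.smul_mul,
    Matrix.mul_smul, hJJ, hEJ, hJE, hEE]
  module

theorem det_natCast_add_one_smul_one_sub_allOnes {K : Type*} [Field K] [CharZero K] (n : ℕ) :
    det (((n : K) + 1) • (1 : Matrix (Fin n) (Fin n) K) - of fun _ _ => 1) =
      ((n : K) + 1) ^ (n - 1) := by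
  have hn : (n : K) + 1 ≠ 0 := n.cast_add_one_ne_zero
  have hrank_one : ((n : K) + 1) • (1 : Matrix (Fin n) (Fin n) K) - of (fun _ _ => 1) =
      ((n : K) + 1) • (1 + replicateCol Unit (fun _ : Fin n => -((n : K) + 1)⁻¹) *
        replicateRow Unit (fun _ : Fin n => (1 : K))) := by
    ext i j
    by_cases hij : i = j <;> simp [hij, mul_apply, mul_add, hn]
  rw [hrank_one, det_smul, det_one_add_replicateCol_mul_replicateRow]
  cases n with
  | zero => simp
  | succ n =>
    simp only [dotProduct, Finset.sum_const, Finset.card_univ, Fintype.card_fin, nsmul_eq_mul]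
    rw [Nat.add_sub_cancel, pow_succ]
    field_simp
    ring

end Matrix

/-- The Gram determinant of the basis matrix B is (k+1)^{k-1}/k^k. -/
theorem stmt9 (k : ℕ) (hk : 2 ≤ k)
    (B : Matrix (Fin (k + 1)) (Fin k) ℝ)
    (hB : ∀ i j, B i j = if i = Fin.castSucc j
        then -(k : ℝ) / Real.sqrt ((k : ℝ) ^ 2 + k)
        else 1 / Real.sqrt ((k : ℝ) ^ 2 + k)) :
    (Bᵀ * B).det = ((k : ℝ) + 1) ^ (k - 1) / (k : ℝ) ^ k := by
  have hk0 : (k : ℝ) ≠ 0 := Nat.cast_ne_zero.mpr (by omega)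
  set s := Real.sqrt ((k : ℝ) ^ 2 + k)
  have hs0 : s ≠ 0 := by positivity
  have hs : s⁻¹ * s⁻¹ = ((k : ℝ) * (k + 1))⁻¹ := by
    rw [← mul_inv, Real.mul_self_sqrt (by positivity)]; ring
  have hB' : B = s⁻¹ • (of (fun _ _ => 1) -
      ((k : ℝ) + 1) • (1 : Matrix (Fin (k + 1)) (Fin (k + 1)) ℝ).submatrix id Fin.castSucc) := by
    ext i j
    rw [hB]
    split_ifs with h <;> simp [h, div_eq_inv_mul, one_apply]
  have hgram : Bᵀ * B = (k : ℝ)⁻¹ • (((k : ℝ) + 1) • 1 - of fun _ _ => 1) := by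
    rw [hB', transpose_smul, Matrix.smul_mul, Matrix.mul_smul, smul_smul, hs,
      transpose_mul_self_allOnes_sub_smul_submatrix_one (Fin.castSucc_injective k),
      Fintype.card_fin]
    match_scalars <;> field_simp
    ring
  rw [hgram, det_smul, det_natCast_add_one_smul_one_sub_allOnes, Fintype.card_fin, inv_pow]
  field_simp
end

section
/- Let k ≥ 2 and let B be the (k+1)×k matrix with columns f_1,…,f_k as above ((f_j)_i = 1/√(k²+k) for i ≠ j, (f_j)_j = −k/√(k²+k)). Then for every nonzero x ∈ ℤ^k, ‖Bx‖ ≥ 1, with equality if and only if Bx = ±f_j for some j ∈ {1,…,k+1}, where f_{k+1} = −(f_1+⋯+f_k). In particular, the minimal vectors of the lattice BΖ^k are exactly ±f_1,…,±f_{k+1}. -/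
open Matrix BigOperators

private lemma pat_sum' (k : ℕ) (z : Fin (k+1) → ℤ) (j : Fin (k+1)) (a b : ℤ)
    (hj : z j = a) (hoth : ∀ i, i ≠ j → z i = b) :
    ∑ i, (z i)^2 = a^2 + (k:ℤ) * b^2 := by
  rw [← Finset.add_sum_erase _ _ (Finset.mem_univ j), hj]
  congr 1
  rw [Finset.sum_congr rfl (fun i hi => by
    rw [hoth i (Finset.ne_of_mem_erase hi)]), Finset.sum_const,
    Finset.card_erase_of_mem (Finset.mem_univ j)]
  simp [mul_comm]

private lemma key2' (k : ℕ) (hk : 2 ≤ k) (z m : Fin (k+1) → ℤ) (c : ℤ)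
    (hc0 : 0 ≤ c) (hcK : c < (k:ℤ)+1)
    (hm : ∀ i, z i = c + ((k:ℤ)+1) * m i)
    (hsum : ∑ i, z i = 0)
    (hne : z ≠ 0) :
    ((k:ℤ)^2 + k ≤ ∑ i, (z i)^2) ∧
    ((∑ i, (z i)^2 = (k:ℤ)^2 + k) ↔ ∃ j, (z j = -(k:ℤ) ∧ ∀ i, i ≠ j → z i = 1)
      ∨ (z j = (k:ℤ) ∧ ∀ i, i ≠ j → z i = -1)) := by
  have hk' : (2:ℤ) ≤ (k:ℤ) := by exact_mod_cast hk
  have hmm : ∀ i : Fin (k+1), 0 ≤ m i * (m i + 1) := by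
    intro i
    rcases le_or_gt 0 (m i) with h | h
    · positivity
    · nlinarith
  have hP0 : 0 ≤ ∑ i, m i * (m i + 1) := Finset.sum_nonneg fun i _ => hmm i
  have hsum2 : ((k:ℤ)+1) * c + ((k:ℤ)+1) * ∑ i, m i = 0 := by
    have h : ∑ i, z i = ∑ i : Fin (k+1), (c + ((k:ℤ)+1) * m i) :=
      Finset.sum_congr rfl fun i _ => hm i
    rw [hsum] at h
    rw [Finset.sum_add_distrib, Finset.sum_const, ← Finset.mul_sum] at h
    simp only [Finset.card_univ, Fintype.card_fin, nsmul_eq_mul] at h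
    push_cast at h
    linarith
  have hM : ∑ i, m i = -c := by
    have h : ((k:ℤ)+1) * (c + ∑ i, m i) = 0 := by linarith [hsum2]
    rcases mul_eq_zero.mp h with h' | h'
    · exfalso; linarith
    · linarith
  have hident : ∑ i, (z i)^2 =
      ((k:ℤ)+1)^2 * (∑ i, m i * (m i + 1)) + ((k:ℤ)+1) * (c * (((k:ℤ)+1) - c)) := by
    have h1 : ∀ i : Fin (k+1), (z i)^2 =
        ((k:ℤ)+1)^2 * (m i * (m i + 1)) + (2*c - ((k:ℤ)+1)) * z i
          + c * (((k:ℤ)+1) - c) := by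
      intro i
      rw [hm i]; ring
    rw [Finset.sum_congr rfl fun i _ => h1 i]
    rw [Finset.sum_add_distrib, Finset.sum_add_distrib, ← Finset.mul_sum,
      ← Finset.mul_sum, hsum, Finset.sum_const]
    simp only [Finset.card_univ, Fintype.card_fin, nsmul_eq_mul]
    push_cast
    ring
  have hback : (∃ j, (z j = -(k:ℤ) ∧ ∀ i, i ≠ j → z i = 1)
      ∨ (z j = (k:ℤ) ∧ ∀ i, i ≠ j → z i = -1)) → ∑ i, (z i)^2 = (k:ℤ)^2 + k := by
    rintro ⟨j, ⟨hj, ho⟩ | ⟨hj, ho⟩⟩ <;> rw [pat_sum' k z j _ _ hj ho] <;> ring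
  rcases eq_or_lt_of_le hc0 with hc | hc1
  · -- c = 0 : strict inequality
    have hczero : c = 0 := hc.symm
    subst hczero
    have hzK : ∀ i, z i = ((k:ℤ)+1) * m i := by intro i; rw [hm i]; ring
    obtain ⟨i0, hi0⟩ : ∃ i, m i ≠ 0 := by
      by_contra h
      push_neg at h
      exact hne (funext fun i => by simp [hzK i, h i])
    obtain ⟨i1, hi1ne, hi1⟩ : ∃ i1, i1 ≠ i0 ∧ m i1 ≠ 0 := by
      by_contra h
      push_neg at h
      have h2 : ∑ i, m i = m i0 :=
        Finset.sum_eq_single i0 (fun i _ hi => h i hi) (fun hi => absurd (Finset.mem_univ i0) hi)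
      rw [hM] at h2
      exact hi0 (by omega)
    have hsq : ∀ i : Fin (k+1), m i ≠ 0 → ((k:ℤ)+1)^2 ≤ (z i)^2 := by
      intro i hi
      rw [hzK i]
      have : 1 ≤ (m i)^2 := by
        rcases lt_or_gt_of_ne hi with h | h <;> nlinarith
      nlinarith
    have hsub : z i1 ^ 2 + z i0 ^ 2 ≤ ∑ i, (z i)^2 := by
      have h : ∑ i ∈ ({i1, i0} : Finset (Fin (k+1))), (z i)^2 = z i1 ^2 + z i0 ^2 :=
        Finset.sum_pair hi1ne
      rw [← h]
      exact Finset.sum_le_sum_of_subset_of_nonneg (Finset.subset_univ _)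
        (fun i _ _ => sq_nonneg _)
    have hstrict : (k:ℤ)^2 + k < ∑ i, (z i)^2 := by
      have h1 := hsq i0 hi0
      have h2 := hsq i1 hi1
      nlinarith
    exact ⟨le_of_lt hstrict, ⟨fun h => absurd h (ne_of_gt hstrict),
      fun h => absurd (hback h) (ne_of_gt hstrict)⟩⟩
  · -- 1 ≤ c ≤ k
    have hc1' : 1 ≤ c := hc1
    have hck : c ≤ (k:ℤ) := by omega
    have hG : (k:ℤ) ≤ c * (((k:ℤ)+1) - c) := by nlinarith
    have hineq : (k:ℤ)^2 + k ≤ ∑ i, (z i)^2 := by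
      rw [hident]; nlinarith
    refine ⟨hineq, ⟨fun heq => ?_, hback⟩⟩
    rw [hident] at heq
    have hPz : ∑ i, m i * (m i + 1) = 0 := by nlinarith
    have hGk : c * (((k:ℤ)+1) - c) = (k:ℤ) := by nlinarith
    have hdich : ∀ i : Fin (k+1), z i = c ∨ z i = c - ((k:ℤ)+1) := by
      intro i
      have h := (Finset.sum_eq_zero_iff_of_nonneg fun i _ => hmm i).mp hPz i (Finset.mem_univ i)
      rcases mul_eq_zero.mp h with h' | h'
      · left; rw [hm i, h']; ring
      · right; rw [hm i, show m i = -1 by omega]; ring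
    have hc1k : c = 1 ∨ c = (k:ℤ) := by
      have h : (c - 1) * ((k:ℤ) - c) = 0 := by nlinarith
      rcases mul_eq_zero.mp h with h' | h'
      · left; omega
      · right; omega
    rcases hc1k with hcv | hcv
    · -- c = 1 : entries in {1, -k}
      subst hcv
      have hdich' : ∀ i : Fin (k+1), z i = 1 ∨ z i = -(k:ℤ) := by
        intro i; rcases hdich i with h | h
        · left; exact h
        · right; rw [h]; ring
      set T : Finset (Fin (k+1)) := Finset.univ.filter (fun i => z i = -(k:ℤ)) with hT
      have hcard : T.card = 1 := by
        have hsplit := Finset.sum_filter_add_sum_filter_not Finset.univ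
          (fun i => z i = -(k:ℤ)) z
        rw [hsum] at hsplit
        have h1 : ∑ i ∈ T, z i = (T.card : ℤ) * (-(k:ℤ)) := by
          rw [Finset.sum_congr rfl (fun i hi => (Finset.mem_filter.mp hi).2),
            Finset.sum_const, nsmul_eq_mul]
        have h2 : ∑ i ∈ Finset.univ.filter (fun i => ¬ z i = -(k:ℤ)), z i
            = ((Finset.univ.filter (fun i => ¬ z i = -(k:ℤ))).card : ℤ) := by
          rw [Finset.sum_congr rfl (fun i hi => by
            rcases hdich' i with h | h
            · exact h
            · exact absurd h (Finset.mem_filter.mp hi).2), Finset.sum_const,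
            nsmul_eq_mul, mul_one]
        have h3 : T.card + (Finset.univ.filter (fun i => ¬ z i = -(k:ℤ))).card = k + 1 := by
          rw [Finset.card_filter_add_card_filter_not]
          simp
        rw [h1, h2] at hsplit
        have h4 : (T.card : ℤ) * (-(k:ℤ)) +
            ((k:ℤ) + 1 - (T.card : ℤ)) = 0 := by
          have h6 : ((Finset.univ.filter (fun i => ¬ z i = -(k:ℤ))).card : ℤ)
              = (k:ℤ) + 1 - (T.card : ℤ) := by omega
          rw [h6] at hsplit
          linarith
        have h5 : ((T.card : ℤ) - 1) * ((k:ℤ) + 1) = 0 := by linarith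
        rcases mul_eq_zero.mp h5 with h | h
        · omega
        · exfalso; linarith
      obtain ⟨j, hj⟩ := Finset.card_eq_one.mp hcard
      refine ⟨j, Or.inl ⟨?_, ?_⟩⟩
      · have h7 : j ∈ T := hj ▸ Finset.mem_singleton_self j
        exact (Finset.mem_filter.mp h7).2
      · intro i hi
        rcases hdich' i with h | h
        · exact h
        · exfalso
          have h7 : i ∈ T := Finset.mem_filter.mpr ⟨Finset.mem_univ i, h⟩
          rw [hj, Finset.mem_singleton] at h7
          exact hi h7
    · -- c = k : entries in {k, -1}
      subst hcv
      have hdich' : ∀ i : Fin (k+1), z i = (k:ℤ) ∨ z i = -1 := by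
        intro i; rcases hdich i with h | h
        · left; exact h
        · right; rw [h]; ring
      set T : Finset (Fin (k+1)) := Finset.univ.filter (fun i => z i = (k:ℤ)) with hT
      have hcard : T.card = 1 := by
        have hsplit := Finset.sum_filter_add_sum_filter_not Finset.univ
          (fun i => z i = (k:ℤ)) z
        rw [hsum] at hsplit
        have h1 : ∑ i ∈ T, z i = (T.card : ℤ) * (k:ℤ) := by
          rw [Finset.sum_congr rfl (fun i hi => (Finset.mem_filter.mp hi).2),
            Finset.sum_const, nsmul_eq_mul]
        have h2 : ∑ i ∈ Finset.univ.filter (fun i => ¬ z i = (k:ℤ)), z i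
            = -((Finset.univ.filter (fun i => ¬ z i = (k:ℤ))).card : ℤ) := by
          rw [Finset.sum_congr rfl (fun i hi => by
            rcases hdich' i with h | h
            · exact absurd h (Finset.mem_filter.mp hi).2
            · exact h), Finset.sum_const, nsmul_eq_mul, mul_neg_one]
        have h3 : T.card + (Finset.univ.filter (fun i => ¬ z i = (k:ℤ))).card = k + 1 := by
          rw [Finset.card_filter_add_card_filter_not]
          simp
        rw [h1, h2] at hsplit
        have h4 : (T.card : ℤ) * (k:ℤ) -
            ((k:ℤ) + 1 - (T.card : ℤ)) = 0 := by
          have h6 : ((Finset.univ.filter (fun i => ¬ z i = (k:ℤ))).card : ℤ)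
              = (k:ℤ) + 1 - (T.card : ℤ) := by omega
          rw [h6] at hsplit
          linarith
        have h5 : ((T.card : ℤ) - 1) * ((k:ℤ) + 1) = 0 := by linarith
        rcases mul_eq_zero.mp h5 with h | h
        · omega
        · exfalso; linarith
      obtain ⟨j, hj⟩ := Finset.card_eq_one.mp hcard
      refine ⟨j, Or.inr ⟨?_, ?_⟩⟩
      · have h7 : j ∈ T := hj ▸ Finset.mem_singleton_self j
        exact (Finset.mem_filter.mp h7).2
      · intro i hi
        rcases hdich' i with h | h
        · exfalso
          have h7 : i ∈ T := Finset.mem_filter.mpr ⟨Finset.mem_univ i, h⟩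
          rw [hj, Finset.mem_singleton] at h7
          exact hi h7
        · exact h

private lemma key' (k : ℕ) (hk : 2 ≤ k) (z : Fin (k+1) → ℤ) (S0 : ℤ)
    (hsum : ∑ i, z i = 0)
    (hcong : ∀ i, ((k:ℤ)+1) ∣ (z i - S0))
    (hne : z ≠ 0) :
    ((k:ℤ)^2 + k ≤ ∑ i, (z i)^2) ∧
    ((∑ i, (z i)^2 = (k:ℤ)^2 + k) ↔ ∃ j, (z j = -(k:ℤ) ∧ ∀ i, i ≠ j → z i = 1)
      ∨ (z j = (k:ℤ) ∧ ∀ i, i ≠ j → z i = -1)) := by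
  have hK0 : (0:ℤ) < (k:ℤ) + 1 := by positivity
  refine key2' k hk z (fun i => (z i - S0 % ((k:ℤ)+1)) / ((k:ℤ)+1)) (S0 % ((k:ℤ)+1))
    (Int.emod_nonneg _ (ne_of_gt hK0)) (Int.emod_lt_of_pos _ hK0) ?_ hsum hne
  intro i
  have hd : ((k:ℤ)+1) ∣ (z i - S0 % ((k:ℤ)+1)) := by
    have h1 : ((k:ℤ)+1) ∣ (S0 - S0 % ((k:ℤ)+1)) := Int.dvd_self_sub_of_emod_eq rfl
    have h2 : z i - S0 % ((k:ℤ)+1) = (z i - S0) + (S0 - S0 % ((k:ℤ)+1)) := by ring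
    rw [h2]
    exact dvd_add (hcong i) h1
  have h3 := Int.ediv_mul_cancel hd
  linarith

/-- For nonzero integer x, ‖Bx‖ ≥ 1 with equality iff Bx = ±f_j for some j;
so the minimal vectors of the lattice B·ℤ^k are exactly ±f₁,…,±f_{k+1}. -/
theorem stmt10 (k : ℕ) (hk : 2 ≤ k)
    (f : Fin (k + 1) → Fin (k + 1) → ℝ)
    (hf : ∀ j i, f j i = if i = j then -(k : ℝ) / Real.sqrt ((k : ℝ) ^ 2 + k)
                         else 1 / Real.sqrt ((k : ℝ) ^ 2 + k))
    (B : Matrix (Fin (k + 1)) (Fin k) ℝ)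
    (hB : ∀ i j, B i j = f (Fin.castSucc j) i) :
    ∀ x : Fin k → ℤ, x ≠ 0 →
      (1 ≤ ∑ i, (B.mulVec (fun j => (x j : ℝ)) i) ^ 2) ∧
      ((∑ i, (B.mulVec (fun j => (x j : ℝ)) i) ^ 2 = 1) ↔
        ∃ j : Fin (k + 1), B.mulVec (fun j => (x j : ℝ)) = f j ∨
          B.mulVec (fun j => (x j : ℝ)) = -(f j)) := by
  intro x hx
  have hk' : (2:ℝ) ≤ (k:ℝ) := by exact_mod_cast hk
  have hkz : (2:ℤ) ≤ (k:ℤ) := by exact_mod_cast hk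
  set s : ℝ := Real.sqrt ((k:ℝ)^2 + k) with hsdef
  have hpos : (0:ℝ) < (k:ℝ)^2 + k := by nlinarith
  have hs2 : s^2 = (k:ℝ)^2 + k := Real.sq_sqrt (le_of_lt hpos)
  have hspos : 0 < s := Real.sqrt_pos.mpr hpos
  have hsne : s ≠ 0 := ne_of_gt hspos
  have hdiv : ∀ a b : ℝ, a / s = b / s → a = b := fun a b hab =>
    mul_right_cancel₀ hsne (by
      have := (div_eq_div_iff hsne hsne).mp hab
      linarith)
  set S : ℤ := ∑ j, x j with hSdef
  set z : Fin (k+1) → ℤ := fun i =>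
    if h : (i:ℕ) < k then S - ((k:ℤ)+1) * x ⟨(i:ℕ), h⟩ else S with hzdef
  have hz_cast : ∀ j : Fin k, z (Fin.castSucc j) = S - ((k:ℤ)+1) * x j := by
    intro j
    have h : ((Fin.castSucc j : Fin (k+1)) : ℕ) < k := j.isLt
    simp only [hzdef, dif_pos h]
    congr 1
  have hz_last : z (Fin.last k) = S := by
    simp only [hzdef]
    rw [dif_neg (by simp)]
  have hsum : ∑ i, z i = 0 := by
    rw [Fin.sum_univ_castSucc]
    rw [hz_last, Finset.sum_congr rfl (fun j _ => hz_cast j)]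
    rw [Finset.sum_sub_distrib, Finset.sum_const, ← Finset.mul_sum, ← hSdef]
    simp only [Finset.card_univ, Fintype.card_fin, nsmul_eq_mul]
    push_cast
    ring
  have hcong : ∀ i, ((k:ℤ)+1) ∣ (z i - S) := by
    intro i
    simp only [hzdef]
    split
    · exact ⟨-(x _), by ring⟩
    · simp
  have hne : z ≠ 0 := by
    intro h0
    have hS0 : S = 0 := by
      have h := congrFun h0 (Fin.last k)
      rw [hz_last] at h
      exact h
    apply hx
    funext j
    have h := congrFun h0 (Fin.castSucc j)
    rw [hz_cast j, hS0] at h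
    have h' : ((k:ℤ)+1) * x j = 0 := by
      have : (0:ℤ) - ((k:ℤ)+1) * x j = 0 := h
      linarith
    rcases mul_eq_zero.mp h' with h'' | h''
    · exfalso; linarith
    · exact h''
  have hBx : ∀ i, B.mulVec (fun j => ((x j : ℤ) : ℝ)) i = ((z i : ℤ) : ℝ) / s := by
    intro i
    simp only [Matrix.mulVec, dotProduct, hB, hf]
    by_cases h : (i:ℕ) < k
    · have hi0 : i = Fin.castSucc (⟨(i:ℕ), h⟩ : Fin k) := by
        apply Fin.ext; simp
      have hiff : ∀ j : Fin k, (i = Fin.castSucc j) ↔ (j = (⟨(i:ℕ), h⟩ : Fin k)) := by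
        intro j
        constructor
        · intro hij
          exact (Fin.castSucc_inj.mp (hi0 ▸ hij)).symm
        · rintro rfl
          exact hi0
      have hstep : ∀ j : Fin k,
          (if i = Fin.castSucc j then -(k:ℝ)/s else 1/s) * ((x j : ℤ) : ℝ)
          = (1/s) * ((x j : ℤ):ℝ)
            + (if j = (⟨(i:ℕ), h⟩ : Fin k) then (-((k:ℝ)+1)/s) * ((x j : ℤ):ℝ) else 0) := by
        intro j
        simp only [hiff j]
        by_cases hj : j = (⟨(i:ℕ), h⟩ : Fin k)
        · rw [if_pos hj, if_pos hj]
          field_simp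
          ring
        · rw [if_neg hj, if_neg hj, add_zero]
      rw [Finset.sum_congr rfl (fun j _ => hstep j), Finset.sum_add_distrib,
        Finset.sum_ite_eq' Finset.univ, if_pos (Finset.mem_univ _), ← Finset.mul_sum]
      have hzi : z i = S - ((k:ℤ)+1) * x ⟨(i:ℕ), h⟩ := by
        simp only [hzdef, dif_pos h]
      rw [hzi, hSdef]
      push_cast
      field_simp
      ring
    · have hiff : ∀ j : Fin k, ¬ (i = Fin.castSucc j) := by
        intro j hij
        exact h (hij ▸ j.isLt)
      rw [Finset.sum_congr rfl (fun j _ => by rw [if_neg (hiff j)])]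
      have hzi : z i = S := by simp only [hzdef, dif_neg h]
      rw [hzi, hSdef]
      push_cast
      rw [Finset.sum_div]
      exact Finset.sum_congr rfl fun j _ => one_div_mul_eq_div s _
  have hsumsq : ∑ i, (B.mulVec (fun j => ((x j : ℤ) : ℝ)) i)^2
      = (((∑ i, (z i)^2 : ℤ) : ℝ)) / ((k:ℝ)^2 + k) := by
    rw [Finset.sum_congr rfl (fun i _ => by rw [hBx i, div_pow, hs2])]
    rw [← Finset.sum_div]
    push_cast
    ring
  obtain ⟨hge, hiff2⟩ := key' k hk z S hsum hcong hne
  constructor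
  · rw [hsumsq]
    rw [one_le_div hpos]
    exact_mod_cast hge
  · rw [hsumsq, div_eq_one_iff_eq (ne_of_gt hpos)]
    have hcast : (((∑ i, (z i)^2 : ℤ) : ℝ) = (k:ℝ)^2 + k)
        ↔ ((∑ i, (z i)^2 : ℤ) = (k:ℤ)^2 + k) := by
      constructor <;> intro h <;> exact_mod_cast h
    rw [hcast, hiff2]
    apply exists_congr
    intro j
    constructor
    · rintro (⟨hj, ho⟩ | ⟨hj, ho⟩)
      · left
        funext i
        rw [hBx i, hf]
        by_cases hij : i = j
        · subst hij
          rw [if_pos rfl, hj]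
          push_cast
          ring
        · rw [if_neg hij, ho i hij]
          push_cast
          ring
      · right
        funext i
        rw [hBx i, Pi.neg_apply, hf]
        by_cases hij : i = j
        · subst hij
          rw [if_pos rfl, hj]
          push_cast
          ring
        · rw [if_neg hij, ho i hij]
          push_cast
          ring
    · rintro (h | h)
      · refine Or.inl ⟨?_, ?_⟩
        · have hh := congrFun h j
          rw [hBx j, hf, if_pos rfl] at hh
          exact_mod_cast hdiv _ _ hh
        · intro i hi
          have hh := congrFun h i
          rw [hBx i, hf, if_neg hi] at hh
          exact_mod_cast hdiv _ _ hh
      · refine Or.inr ⟨?_, ?_⟩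
        · have hh := congrFun h j
          rw [Pi.neg_apply, hBx j, hf, if_pos rfl] at hh
          have hh' : ((z j : ℤ):ℝ) / s = (k:ℝ) / s := by rw [hh]; ring
          exact_mod_cast hdiv _ _ hh'
        · intro i hi
          have hh := congrFun h i
          rw [Pi.neg_apply, hBx i, hf, if_neg hi] at hh
          have hh' : ((z i : ℤ):ℝ) / s = (-1 : ℝ) / s := by rw [hh]; ring
          exact_mod_cast hdiv _ _ hh'
end

section
/- Let a, b ∈ ℝ with a² + b² ≠ 0, and let A, D, N be commuting symmetric real k×k matrices satisfying N = (A+aI)⁻¹(bI−D) (with A+aI invertible) or N = (D+bI)⁻¹(A−aI) (with D+bI invertible), and A² + D² = (a²+b²)I. Then the 2k×2k block matrix [[A, D],[D, −A]] equals [[I, −N],[N, I]]⁻¹ · [[aI, bI],[bI, −aI]] · [[I, −N],[N, I]]. -/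
open Matrix

/-- Goethals–Seidel representation of the conference matrix blocks:
[[A,D],[D,-A]] = [[I,-N],[N,I]]⁻¹·[[aI,bI],[bI,-aI]]·[[I,-N],[N,I]]. -/
theorem stmt11 (k : ℕ) (a b : ℝ) (hab : a ^ 2 + b ^ 2 ≠ 0)
    (A D N : Matrix (Fin k) (Fin k) ℝ)
    (hA : A.IsSymm) (hD : D.IsSymm) (hN : N.IsSymm)
    (hAD : A * D = D * A) (hAN : A * N = N * A) (hDN : D * N = N * D)
    (hsum : A ^ 2 + D ^ 2 = (a ^ 2 + b ^ 2) • (1 : Matrix (Fin k) (Fin k) ℝ))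
    (hNdef : (IsUnit (A + a • (1 : Matrix (Fin k) (Fin k) ℝ)) ∧
                N = (A + a • 1)⁻¹ * (b • 1 - D)) ∨
             (IsUnit (D + b • (1 : Matrix (Fin k) (Fin k) ℝ)) ∧
                N = (D + b • 1)⁻¹ * (A - a • 1))) :
    Matrix.fromBlocks A D D (-A) =
      (Matrix.fromBlocks 1 (-N) N 1)⁻¹ *
        Matrix.fromBlocks (a • 1) (b • 1) (b • 1) (-(a • (1 : Matrix (Fin k) (Fin k) ℝ))) *
        Matrix.fromBlocks 1 (-N) N 1 := by
  have hs : A * A + D * D = (a ^ 2 + b ^ 2) • (1 : Matrix (Fin k) (Fin k) ℝ) := by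
    rw [← pow_two, ← pow_two]; exact hsum
  -- the two key identities
  have key : N * (A + a • 1) = b • 1 - D ∧ N * (D + b • 1) = A - a • 1 := by
    have hsq : (b • 1 - D) * (D + b • 1) = (A - a • 1) * (A + a • 1) := by
      simp only [mul_add, add_mul, sub_mul, mul_sub, Matrix.smul_mul, Matrix.mul_smul,
        smul_smul, one_mul, mul_one]
      linear_combination (norm := module) -hs
    rcases hNdef with ⟨hU, hNe⟩ | ⟨hU, hNe⟩
    · have hinv : (A + a • 1)⁻¹ * (A + a • 1) = 1 :=
        Matrix.nonsing_inv_mul _ ((Matrix.isUnit_iff_isUnit_det _).mp hU)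
      have hcomm : (b • 1 - D) * (A + a • 1) = (A + a • 1) * (b • 1 - D) := by
        simp only [mul_add, add_mul, sub_mul, mul_sub, Matrix.smul_mul, Matrix.mul_smul,
          smul_smul, one_mul, mul_one]
        linear_combination (norm := module) hAD
      have h1 : N * (A + a • 1) = b • 1 - D := by
        rw [hNe, mul_assoc, hcomm, ← mul_assoc, hinv, one_mul]
      refine ⟨h1, ?_⟩
      apply hU.mul_left_cancel
      calc (A + a • 1) * (N * (D + b • 1))
          = ((A + a • 1) * N) * (D + b • 1) := by rw [mul_assoc]
        _ = (N * (A + a • 1)) * (D + b • 1) := by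
            have : (A + a • 1) * N = N * (A + a • 1) := by
              simp only [mul_add, add_mul, Matrix.smul_mul, Matrix.mul_smul, one_mul, mul_one]
              linear_combination (norm := module) hAN
            rw [this]
        _ = (b • 1 - D) * (D + b • 1) := by rw [h1]
        _ = (A - a • 1) * (A + a • 1) := hsq
        _ = (A + a • 1) * (A - a • 1) := by
            simp only [mul_add, add_mul, sub_mul, mul_sub, Matrix.smul_mul, Matrix.mul_smul,
              smul_smul, one_mul, mul_one]
            module
    · have hinv : (D + b • 1)⁻¹ * (D + b • 1) = 1 :=
        Matrix.nonsing_inv_mul _ ((Matrix.isUnit_iff_isUnit_det _).mp hU)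
      have hcomm : (A - a • 1) * (D + b • 1) = (D + b • 1) * (A - a • 1) := by
        simp only [mul_add, add_mul, sub_mul, mul_sub, Matrix.smul_mul, Matrix.mul_smul,
          smul_smul, one_mul, mul_one]
        linear_combination (norm := module) hAD
      have h2 : N * (D + b • 1) = A - a • 1 := by
        rw [hNe, mul_assoc, hcomm, ← mul_assoc, hinv, one_mul]
      refine ⟨?_, h2⟩
      apply hU.mul_left_cancel
      calc (D + b • 1) * (N * (A + a • 1))
          = ((D + b • 1) * N) * (A + a • 1) := by rw [mul_assoc]
        _ = (N * (D + b • 1)) * (A + a • 1) := by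
            have : (D + b • 1) * N = N * (D + b • 1) := by
              simp only [mul_add, add_mul, Matrix.smul_mul, Matrix.mul_smul, one_mul, mul_one]
              linear_combination (norm := module) hDN
            rw [this]
        _ = (A - a • 1) * (A + a • 1) := by rw [h2]
        _ = (b • 1 - D) * (D + b • 1) := hsq.symm
        _ = (D + b • 1) * (b • 1 - D) := by
            simp only [mul_add, add_mul, sub_mul, mul_sub, Matrix.smul_mul, Matrix.mul_smul,
              smul_smul, one_mul, mul_one]
            module
  obtain ⟨h1, h2⟩ := key
  rw [mul_add, Matrix.mul_smul, mul_one] at h1 h2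
  -- invertibility of M = fromBlocks 1 (-N) N 1
  set M : Matrix (Fin k ⊕ Fin k) (Fin k ⊕ Fin k) ℝ := Matrix.fromBlocks 1 (-N) N 1 with hM
  have hMdet : IsUnit M.det := by
    have hps : Matrix.PosSemidef (N * N) := by
      have := Matrix.posSemidef_conjTranspose_mul_self N
      rwa [Matrix.conjTranspose_eq_transpose_of_trivial, hN.eq] at this
    have hpd : Matrix.PosDef ((1 : Matrix (Fin k) (Fin k) ℝ) + N * N) :=
      Matrix.PosDef.add_posSemidef Matrix.PosDef.one hps
    have hdmul : M * Matrix.fromBlocks 1 N (-N) 1 =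
        Matrix.fromBlocks (1 + N * N) 0 0 (1 + N * N) := by
      rw [hM, Matrix.fromBlocks_multiply]
      congr 1 <;> simp only [one_mul, mul_one, Matrix.neg_mul, Matrix.mul_neg,
        neg_neg] <;> abel
    have : IsUnit (M * Matrix.fromBlocks 1 N (-N) 1).det := by
      rw [hdmul, Matrix.det_fromBlocks_zero₁₂]
      exact (hpd.det_pos.ne'.isUnit).mul (hpd.det_pos.ne'.isUnit)
    rw [Matrix.det_mul] at this
    exact isUnit_of_mul_isUnit_left this
  -- the intertwining identity
  have hMX : M * Matrix.fromBlocks A D D (-A) =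
      Matrix.fromBlocks (a • 1) (b • 1) (b • 1) (-(a • (1 : Matrix (Fin k) (Fin k) ℝ))) * M := by
    rw [hM, Matrix.fromBlocks_multiply, Matrix.fromBlocks_multiply]
    rw [Matrix.fromBlocks_inj]
    refine ⟨?_, ?_, ?_, ?_⟩ <;>
      simp only [one_mul, mul_one, Matrix.neg_mul, Matrix.mul_neg, Matrix.smul_mul,
        Matrix.mul_smul, neg_neg]
    · linear_combination (norm := module) -h2
    · linear_combination (norm := module) h1
    · linear_combination (norm := module) h1
    · linear_combination (norm := module) h2
  rw [mul_assoc, ← hMX, ← mul_assoc, Matrix.nonsing_inv_mul _ hMdet, one_mul]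
end

section
/- Let C = [[A, D],[D, −A]] be a symmetric 2k×2k conference matrix (zero diagonal, ±1 off-diagonal, C² = (2k−1)I) with A, D symmetric commuting k×k matrices and D invertible. Then A² + D² = (2k−1)I and the matrices I + (1/α)A and I − (1/α)A, where α = √(2k−1), are positive definite. -/
/-!
The top-left block of `C * C` gives `A² + D² = α² • 1`. As `D` is symmetric and invertible,
`α² • 1 - A² = Dᵀ * D` is positive definite. For `B = α • 1 + A` one has
`2α • B = (α² • 1 - A²) + Bᵀ * B`, positive definite plus positive semidefinite; replacing `A`
by `-A` handles `α • 1 - A`.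
-/

open Matrix
open scoped ComplexOrder

namespace Matrix

variable {n : Type*} [Fintype n] [DecidableEq n] {𝕜 : Type*} [RCLike 𝕜]

theorem mul_self_add_mul_eq_of_fromBlocks_mul_self_eq {m R : Type*} [Fintype m] [DecidableEq m]
    [Semiring R] {A : Matrix m m R} {B : Matrix m n R} {C : Matrix n m R} {D : Matrix n n R}
    {c : R} (h : fromBlocks A B C D * fromBlocks A B C D = c • 1) : A * A + B * C = c • 1 := by
  simpa [fromBlocks_multiply, ← fromBlocks_one, fromBlocks_smul] using congrArg toBlocks₁₁ h

theorem IsHermitian.posDef_mul_self {D : Matrix n n 𝕜} (hD : D.IsHermitian)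
    (hDunit : IsUnit D.det) : (D * D).PosDef := by
  have hinj : Function.Injective D.mulVec :=
    mulVec_injective_iff_isUnit.2 ((isUnit_iff_isUnit_det D).2 hDunit)
  simpa only [hD.eq] using PosDef.conjTranspose_mul_self D hinj

theorem IsHermitian.posDef_smul_one_add {A : Matrix n n 𝕜} (hA : A.IsHermitian) {α : ℝ}
    (hα : 0 < α) (h : (α ^ 2 • 1 - A * A).PosDef) : (α • 1 + A).PosDef := by
  set B : Matrix n n 𝕜 := α • 1 + A
  have hB : Bᴴ = B := by simp [B, hA.eq]
  have key : (2 * α) • B = (α ^ 2 • 1 - A * A) + Bᴴ * B := by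
    simp only [hB, B, add_mul, mul_add, smul_mul_assoc, mul_smul_comm, one_mul, mul_one]
    module
  have hpos : ((2 * α) • B).PosDef := key ▸ h.add_posSemidef (posSemidef_conjTranspose_mul_self B)
  have h2α : (2 * α)⁻¹ * (2 * α) = 1 := inv_mul_cancel₀ (by positivity)
  simpa only [smul_smul, h2α, one_smul] using hpos.smul (inv_pos.2 (mul_pos two_pos hα))

theorem IsHermitian.posDef_one_add_inv_smul {A : Matrix n n 𝕜} (hA : A.IsHermitian) {α : ℝ}
    (hα : 0 < α) (h : (α ^ 2 • 1 - A * A).PosDef) : (1 + α⁻¹ • A).PosDef := by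
  have : 1 + α⁻¹ • A = α⁻¹ • (α • 1 + A) := by
    rw [smul_add, smul_smul, inv_mul_cancel₀ hα.ne', one_smul]
  rw [this]
  exact (hA.posDef_smul_one_add hα h).smul (inv_pos.2 hα)

end Matrix

theorem stmt12_general (k : ℕ) (hk : 1 ≤ k)
    (A D : Matrix (Fin k) (Fin k) ℝ) (hA : A.IsSymm) (hD : D.IsSymm)
    (hDunit : IsUnit D.det)
    (C : Matrix (Fin k ⊕ Fin k) (Fin k ⊕ Fin k) ℝ)
    (hC : C = Matrix.fromBlocks A D D (-A))
    (hC2 : C * C = ((2 * (k : ℝ) - 1)) • 1) :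
    A ^ 2 + D ^ 2 = ((2 * (k : ℝ) - 1)) • 1 ∧
      (1 + (Real.sqrt (2 * (k : ℝ) - 1))⁻¹ • A).PosDef ∧
      (1 - (Real.sqrt (2 * (k : ℝ) - 1))⁻¹ • A).PosDef := by
  have hsum : A * A + D * D = (2 * (k : ℝ) - 1) • 1 :=
    mul_self_add_mul_eq_of_fromBlocks_mul_self_eq (hC ▸ hC2)
  have hc : 0 < 2 * (k : ℝ) - 1 := by
    have : (1 : ℝ) ≤ k := by exact_mod_cast hk
    linarith
  have hα := Real.sqrt_pos.2 hc
  have hA' : A.IsHermitian := isHermitian_iff_isSymm.2 hA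
  have hgap : (Real.sqrt (2 * (k : ℝ) - 1) ^ 2 • 1 - A * A).PosDef := by
    rw [Real.sq_sqrt hc.le, ← hsum, add_sub_cancel_left]
    exact (isHermitian_iff_isSymm.2 hD).posDef_mul_self hDunit
  refine ⟨by simpa only [sq] using hsum, hA'.posDef_one_add_inv_smul hα hgap, ?_⟩
  simpa only [smul_neg, ← sub_eq_add_neg] using
    hA'.neg.posDef_one_add_inv_smul hα (by rwa [neg_mul_neg])

/-- For a conference matrix C=[[A,D],[D,-A]] with D invertible one has
A²+D²=(2k-1)I and I±(1/α)A positive definite, α=√(2k-1). -/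
theorem stmt12 (k : ℕ) (hk : 1 ≤ k)
    (A D : Matrix (Fin k) (Fin k) ℝ) (hA : A.IsSymm) (hD : D.IsSymm)
    (hAD : A * D = D * A) (hDunit : IsUnit D.det)
    (C : Matrix (Fin k ⊕ Fin k) (Fin k ⊕ Fin k) ℝ)
    (hC : C = Matrix.fromBlocks A D D (-A))
    (hdiag : ∀ i, C i i = 0)
    (hoff : ∀ i j, i ≠ j → C i j = 1 ∨ C i j = -1)
    (hC2 : C * C = ((2 * (k : ℝ) - 1)) • 1) :
    A ^ 2 + D ^ 2 = ((2 * (k : ℝ) - 1)) • 1 ∧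
      (1 + (Real.sqrt (2 * (k : ℝ) - 1))⁻¹ • A).PosDef ∧
      (1 - (Real.sqrt (2 * (k : ℝ) - 1))⁻¹ • A).PosDef :=
  stmt12_general k hk A D hA hD hDunit C hC hC2
end

section
/- Let α > 0 and let A, D be commuting symmetric k×k real matrices with A² + D² = α²I and D invertible. Set N = D⁻¹(A − αI). Then I + N² = 2α(αI + A)⁻¹, and hence √2·(I + N²)^{−1/2} = (I + (1/α)A)^{1/2}. -/
/-!
Write `B = αI + A` and `C = αI - A`. Then `C * B = D ^ 2`, so `B` and `C` are invertible, and
since `D⁻¹` commutes with `C`, `N ^ 2 = D⁻² C² = B⁻¹ C`; hence `1 + N ^ 2 = B⁻¹ (B + C) = 2α B⁻¹`.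
For the square roots, `(T / √2) ^ 2 = (2α)⁻¹ B` is the inverse of `S ^ 2`, so `S⁻¹` and `T / √2`
are positive definite square roots of the same matrix and therefore coincide.
-/

open Matrix

theorem Commute.nonsing_inv_right {n R : Type*} [Fintype n] [DecidableEq n] [CommRing R]
    {A D : Matrix n n R} (h : Commute A D) : Commute A D⁻¹ := by
  by_cases hD : IsUnit D.det
  · have hu : IsUnit D := (isUnit_iff_isUnit_det D).mpr hD
    rw [← hu.unit_spec, ← coe_units_inv]
    exact h.units_inv_right
  · rw [nonsing_inv_apply_not_isUnit D hD]
    exact Commute.zero_right A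

namespace Matrix

section PositiveSquareRoot

open scoped ComplexOrder

variable {n 𝕜 : Type*} [Fintype n] [DecidableEq n] [RCLike 𝕜] {S T : Matrix n n 𝕜}

theorem PosSemidef.eq_of_sq_eq_sq (hS : S.PosSemidef) (hT : T.PosSemidef)
    (h : S ^ 2 = T ^ 2) : S = T := by
  open scoped MatrixOrder in
  exact (CFC.sq_eq_sq_iff S T hS.nonneg hT.nonneg).mp h

theorem PosDef.inv_eq_of_sq_mul_sq_eq_one (hS : S.PosDef) (hT : T.PosDef)
    (h : T ^ 2 * S ^ 2 = 1) : S⁻¹ = T :=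
  hS.inv.posSemidef.eq_of_sq_eq_sq hT.posSemidef (by rw [inv_pow', inv_eq_left_inv h])

end PositiveSquareRoot

section

variable {n R : Type*} [Fintype n] [DecidableEq n] [CommRing R] {a : R} {A D : Matrix n n R}

theorem smul_one_sub_mul_smul_one_add_eq_sq (hsum : A ^ 2 + D ^ 2 = a ^ 2 • 1) :
    (a • 1 - A) * (a • 1 + A) = D ^ 2 := by
  rw [eq_sub_of_add_eq' hsum]
  simp only [sub_mul, mul_add, one_mul, mul_one, smul_mul_assoc, mul_smul_comm, sq]
  module

theorem isUnit_det_smul_one_sub_and_add (hsum : A ^ 2 + D ^ 2 = a ^ 2 • 1)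
    (hD : IsUnit D.det) : IsUnit (a • 1 - A).det ∧ IsUnit (a • 1 + A).det := by
  have h : IsUnit ((a • 1 - A).det * (a • 1 + A).det) := by
    rw [← det_mul, smul_one_sub_mul_smul_one_add_eq_sq hsum, det_pow]
    exact hD.pow 2
  exact ⟨isUnit_of_mul_isUnit_left h, isUnit_of_mul_isUnit_right h⟩

theorem one_add_sq_eq_smul_inv (hAD : Commute A D) (hD : IsUnit D.det)
    (hsum : A ^ 2 + D ^ 2 = a ^ 2 • 1) :
    1 + (D⁻¹ * (A - a • 1)) ^ 2 = (2 * a) • (a • 1 + A)⁻¹ := by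
  set B := a • 1 + A
  set C := a • 1 - A
  obtain ⟨hC, hB⟩ := isUnit_det_smul_one_sub_and_add hsum hD
  have hCD : Commute D⁻¹ C :=
    (((Commute.one_left D).smul_left a).sub_left hAD).nonsing_inv_right.symm
  have hN : (D⁻¹ * (A - a • 1)) ^ 2 = B⁻¹ * C := calc
    _ = (D⁻¹ * C) ^ 2 := by rw [← neg_sub, mul_neg, neg_sq]
    _ = (C * B)⁻¹ * C ^ 2 := by
      rw [hCD.mul_pow, inv_pow', smul_one_sub_mul_smul_one_add_eq_sq hsum]
    _ = B⁻¹ * (C⁻¹ * C) * C := by rw [mul_inv_rev, sq]; noncomm_ring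
    _ = B⁻¹ * C := by rw [nonsing_inv_mul C hC, mul_one]
  calc 1 + _ = B⁻¹ * (B + C) := by rw [hN, mul_add, nonsing_inv_mul B hB]
    _ = B⁻¹ * ((2 * a) • 1) := by congr 1; simp only [B, C]; module
    _ = (2 * a) • B⁻¹ := by rw [mul_smul_comm, mul_one]

end

theorem sqrt_two_smul_inv_eq {n : Type*} [Fintype n] [DecidableEq n] {a : ℝ}
    {A S T : Matrix n n ℝ} (ha : 0 < a) (hB : IsUnit (a • 1 + A).det) (hS : S.PosDef)
    (hT : T.PosDef) (hS2 : S ^ 2 = (2 * a) • (a • 1 + A)⁻¹) (hT2 : T ^ 2 = 1 + a⁻¹ • A) :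
    √2 • S⁻¹ = T := by
  have hsq : ((√2)⁻¹ • T) ^ 2 * S ^ 2 = 1 := by
    have hT2' : T ^ 2 = a⁻¹ • (a • 1 + A) := by
      rw [hT2, smul_add, smul_smul, inv_mul_cancel₀ ha.ne', one_smul]
    rw [smul_pow, hT2', hS2, smul_smul, smul_mul_smul_comm, mul_nonsing_inv _ hB, inv_pow,
      Real.sq_sqrt zero_le_two, show (2⁻¹ * a⁻¹ * (2 * a) : ℝ) = 1 by field_simp, one_smul]
  rw [(hS.inv_eq_of_sq_mul_sq_eq_one (hT.smul (by positivity)) hsq), smul_smul,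
    mul_inv_cancel₀ (by positivity), one_smul]

end Matrix

theorem stmt13_general (k : ℕ) (α : ℝ) (hα : 0 < α)
    (A D : Matrix (Fin k) (Fin k) ℝ)
    (hAD : A * D = D * A) (hDunit : IsUnit D.det)
    (hsum : A ^ 2 + D ^ 2 = (α ^ 2) • (1 : Matrix (Fin k) (Fin k) ℝ))
    (N : Matrix (Fin k) (Fin k) ℝ)
    (hN : N = D⁻¹ * (A - α • 1)) :
    1 + N ^ 2 = (2 * α) • (α • (1 : Matrix (Fin k) (Fin k) ℝ) + A)⁻¹ ∧
      ∀ S T : Matrix (Fin k) (Fin k) ℝ, S.PosDef → T.PosDef →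
        S ^ 2 = 1 + N ^ 2 → T ^ 2 = 1 + α⁻¹ • A →
        Real.sqrt 2 • S⁻¹ = T := by
  have key : 1 + N ^ 2 = (2 * α) • (α • 1 + A)⁻¹ := hN ▸ one_add_sq_eq_smul_inv hAD hDunit hsum
  exact ⟨key, fun S T hS hT hS2 hT2 => sqrt_two_smul_inv_eq hα
    (isUnit_det_smul_one_sub_and_add hsum hDunit).2 hS hT (hS2.trans key) hT2⟩

/-- I+N² = 2α(αI+A)⁻¹, hence √2·(I+N²)^{-1/2} = (I+(1/α)A)^{1/2}. -/
theorem stmt13 (k : ℕ) (α : ℝ) (hα : 0 < α)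
    (A D : Matrix (Fin k) (Fin k) ℝ) (hA : A.IsSymm) (hD : D.IsSymm)
    (hAD : A * D = D * A) (hDunit : IsUnit D.det)
    (hsum : A ^ 2 + D ^ 2 = (α ^ 2) • (1 : Matrix (Fin k) (Fin k) ℝ))
    (N : Matrix (Fin k) (Fin k) ℝ)
    (hN : N = D⁻¹ * (A - α • 1)) :
    1 + N ^ 2 = (2 * α) • (α • (1 : Matrix (Fin k) (Fin k) ℝ) + A)⁻¹ ∧
      ∀ S T : Matrix (Fin k) (Fin k) ℝ, S.PosDef → T.PosDef →
        S ^ 2 = 1 + N ^ 2 → T ^ 2 = 1 + α⁻¹ • A →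
        Real.sqrt 2 • S⁻¹ = T :=
  stmt13_general k α hα A D hAD hDunit hsum N hN
end

section
/- Let f_1,…,f_{28} ∈ ℝ⁸ be the 28 vectors obtained by normalizing (dividing by √24) all distinct permutations of (−3,−3,1,1,1,1,1,1). Then each f_j is a unit vector orthogonal to (1,1,…,1), |(f_i,f_j)| = 1/3 for i ≠ j, and for every x ∈ ℝ⁸ with x_1+⋯+x_8 = 0 one has Σ_{j=1}^{28} (f_j, x)² = 4‖x‖². -/
set_option maxRecDepth 100000


open BigOperators

/-- The 28 normalized permutations of (-3,-3,1,…,1) in ℝ⁸ are unit vectors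
orthogonal to (1,…,1), equiangular with cosine 1/3, and form a tight frame
with constant 4 on the hyperplane Σx_i = 0. -/
theorem stmt16
    (f : Fin 8 → Fin 8 → Fin 8 → ℝ)
    (hf : ∀ a b i, f a b i =
      if i = a ∨ i = b then -3 / Real.sqrt 24 else 1 / Real.sqrt 24) :
    (∀ a b : Fin 8, a ≠ b → ∑ i, f a b i ^ 2 = 1) ∧
    (∀ a b : Fin 8, a ≠ b → ∑ i, f a b i = 0) ∧
    (∀ a b c d : Fin 8, a ≠ b → c ≠ d →
      ¬((a = c ∧ b = d) ∨ (a = d ∧ b = c)) →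
      |∑ i, f a b i * f c d i| = 1 / 3) ∧
    (∀ x : Fin 8 → ℝ, ∑ i, x i = 0 →
      ∑ p ∈ Finset.univ.filter (fun p : Fin 8 × Fin 8 => p.1 < p.2),
        (∑ i, f p.1 p.2 i * x i) ^ 2 = 4 * ∑ i, x i ^ 2) := by
  have hs24 : Real.sqrt 24 ^ 2 = 24 := Real.sq_sqrt (by norm_num)
  have hs0 : Real.sqrt 24 ≠ 0 := by positivity
  set s := Real.sqrt 24 with hsdef
  -- key dot-product lemma
  have hdot : ∀ a b : Fin 8, a ≠ b → ∀ y : Fin 8 → ℝ,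
      ∑ i, f a b i * y i = ((∑ i, y i) - 4 * y a - 4 * y b) / s := by
    intro a b hab y
    have e : ∀ i : Fin 8, f a b i * y i
        = (y i - 4 * (if i = a then y i else 0) - 4 * (if i = b then y i else 0)) / s := by
      intro i
      rw [hf]
      rcases eq_or_ne i a with h1 | h1
      · rw [if_pos (Or.inl h1), if_pos h1, if_neg (by rw [h1]; exact hab)]
        ring
      · rcases eq_or_ne i b with h2 | h2
        · rw [if_pos (Or.inr h2), if_neg h1, if_pos h2]; ring
        · rw [if_neg (by tauto), if_neg h1, if_neg h2]; ring
    calc ∑ i, f a b i * y i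
        = ∑ i : Fin 8, (y i - 4 * (if i = a then y i else 0)
            - 4 * (if i = b then y i else 0)) / s :=
          Finset.sum_congr rfl (fun i _ => e i)
      _ = ((∑ i, y i) - 4 * y a - 4 * y b) / s := by
          rw [← Finset.sum_div, Finset.sum_sub_distrib, Finset.sum_sub_distrib,
            ← Finset.mul_sum, ← Finset.mul_sum,
            Finset.sum_ite_eq' Finset.univ a y, Finset.sum_ite_eq' Finset.univ b y]
          simp
  have part2 : ∀ a b : Fin 8, a ≠ b → ∑ i, f a b i = 0 := by
    intro a b hab
    have h := hdot a b hab (fun _ => 1)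
    simp only [mul_one, Finset.sum_const, Finset.card_univ, Fintype.card_fin,
      nsmul_eq_mul] at h
    rw [h]
    norm_num
  have part1 : ∀ a b : Fin 8, a ≠ b → ∑ i, f a b i ^ 2 = 1 := by
    intro a b hab
    have h := hdot a b hab (f a b)
    rw [part2 a b hab, hf a b a, hf a b b, if_pos (Or.inl rfl), if_pos (Or.inr rfl)] at h
    have e : ∀ i : Fin 8, f a b i ^ 2 = f a b i * f a b i := fun i => sq (f a b i) ▸ by ring
    rw [Finset.sum_congr rfl (fun i _ => e i), h,
      show (0 - 4 * (-3 / s) - 4 * (-3 / s)) / s = 24 / s ^ 2 by field_simp; ring,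
      hs24]
    norm_num
  refine ⟨part1, part2, ?_, ?_⟩
  · intro a b c d hab hcd hne
    have h := hdot a b hab (f c d)
    rw [part2 c d hcd, hf c d a, hf c d b] at h
    have hnotboth : ¬((a = c ∨ a = d) ∧ (b = c ∨ b = d)) := by
      rintro ⟨h1 | h1, h2 | h2⟩
      · exact hab (h1.trans h2.symm)
      · exact hne (Or.inl ⟨h1, h2⟩)
      · exact hne (Or.inr ⟨h1, h2⟩)
      · exact hab (h1.trans h2.symm)
    by_cases hA : a = c ∨ a = d <;> by_cases hB : b = c ∨ b = d
    · exact absurd ⟨hA, hB⟩ hnotboth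
    · rw [if_pos hA, if_neg hB] at h
      rw [h, show (0 - 4 * (-3 / s) - 4 * (1 / s)) / s = 8 / s ^ 2 by field_simp; ring,
        hs24]
      norm_num
    · rw [if_neg hA, if_pos hB] at h
      rw [h, show (0 - 4 * (1 / s) - 4 * (-3 / s)) / s = 8 / s ^ 2 by field_simp; ring,
        hs24]
      norm_num
    · rw [if_neg hA, if_neg hB] at h
      rw [h, show (0 - 4 * (1 / s) - 4 * (1 / s)) / s = -8 / s ^ 2 by field_simp; ring,
        hs24]
      rw [show ((-8 : ℝ) / 24) = -(1/3) by norm_num, abs_neg, abs_of_nonneg (by norm_num)]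
  · intro x hx
    have key : ∀ p : Fin 8 × Fin 8, p.1 < p.2 →
        (∑ i, f p.1 p.2 i * x i) ^ 2 = 16 * (x p.1 + x p.2) ^ 2 / 24 := by
      intro p hp
      rw [hdot p.1 p.2 (ne_of_lt hp) x, hx, div_pow, hs24]
      ring
    rw [Finset.sum_congr rfl
      (fun p hp => key p (by simpa using (Finset.mem_filter.mp hp).2))]
    rw [Finset.sum_filter, Fintype.sum_prod_type]
    simp only [Fin.sum_univ_eight]
    rw [Fin.sum_univ_eight] at hx
    simp (config := { decide := true }) only [if_true, if_false]
    linear_combination (2/3) * (x 0 + x 1 + x 2 + x 3 + x 4 + x 5 + x 6 + x 7) * hx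
end

section
/- Let B̃ be the 8×7 integer matrix with columns √24·f_1,…,√24·f_7, where f_1,…,f_7 are the vectors in ℝ⁸ obtained by normalizing the permutations of (−3,−3,1,…,1) having −3 in positions {1,2},{1,3},{1,4},{1,5},{1,6},{1,7},{3,6} respectively. Then for every nonzero x ∈ ℤ⁷, ‖B̃x‖² ≥ 24, i.e., the lattice B̃ℤ⁷ (rescaled by 1/√24) has minimal distance 1. -/
open Matrix BigOperators

/-!
Every entry of `B̃` is `≡ 1 (mod 4)` and every column sums to `0`, so the coordinates of
`y = B̃x` are all congruent to `∑ xⱼ` mod 4 and sum to `0`. If they are odd, then (after a sign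
change) each lies in `1 + 4ℤ`, where `y² ≥ 3 - 2y`; summing over the 8 coordinates gives
`‖y‖² ≥ 24`. If they are `≡ 2`, each `y² ≥ 4`. If they are `≡ 0`, then `y ≠ 0` (as `B̃` is
injective) has at least two nonzero coordinates, each of square `≥ 16`.
-/

namespace Int

variable {ι : Type*} [Fintype ι]

lemma three_sub_two_mul_le_sq_of_modEq_one {y : ℤ} (hy : y ≡ 1 [ZMOD 4]) : 3 - 2 * y ≤ y ^ 2 := by
  obtain ⟨k, rfl⟩ : ∃ k, y = 4 * k + 1 := by
    obtain ⟨k, hk⟩ := hy.symm.dvd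
    exact ⟨k, by linarith⟩
  -- `y ^ 2 + 2 * y - 3 = 16 * k * (k + 1) ≥ 0`
  rcases le_or_gt 0 k with hk | hk <;> nlinarith

lemma four_le_sq_of_modEq_two {y : ℤ} (hy : y ≡ 2 [ZMOD 4]) : 4 ≤ y ^ 2 := by
  obtain ⟨k, rfl⟩ : ∃ k, y = 4 * k + 2 := by
    obtain ⟨k, hk⟩ := hy.symm.dvd
    exact ⟨k, by linarith⟩
  rcases le_or_gt 0 k with hk | hk <;> nlinarith

lemma sixteen_le_sq_of_four_dvd {y : ℤ} (hy : 4 ∣ y) (hne : y ≠ 0) : 16 ≤ y ^ 2 := by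
  obtain ⟨k, rfl⟩ := hy
  rcases lt_trichotomy k 0 with hk | hk | hk
  · nlinarith
  · simp [hk] at hne
  · nlinarith

lemma three_mul_card_le_sum_sq_of_modEq_one {y : ι → ℤ} (hy : ∀ i, y i ≡ 1 [ZMOD 4])
    (hsum : ∑ i, y i = 0) : 3 * (Fintype.card ι : ℤ) ≤ ∑ i, y i ^ 2 :=
  calc 3 * (Fintype.card ι : ℤ) = ∑ i, (3 - 2 * y i) := by
        rw [Finset.sum_sub_distrib, ← Finset.mul_sum, hsum]; simp [mul_comm]
    _ ≤ ∑ i, y i ^ 2 := Finset.sum_le_sum fun i _ => three_sub_two_mul_le_sq_of_modEq_one (hy i)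

lemma four_mul_card_le_sum_sq_of_modEq_two {y : ι → ℤ} (hy : ∀ i, y i ≡ 2 [ZMOD 4]) :
    4 * (Fintype.card ι : ℤ) ≤ ∑ i, y i ^ 2 :=
  calc 4 * (Fintype.card ι : ℤ) = ∑ _i : ι, 4 := by simp [mul_comm]
    _ ≤ ∑ i, y i ^ 2 := Finset.sum_le_sum fun i _ => four_le_sq_of_modEq_two (hy i)

lemma thirty_two_le_sum_sq_of_four_dvd {y : ι → ℤ} (hy : ∀ i, 4 ∣ y i)
    (hsum : ∑ i, y i = 0) (hne : y ≠ 0) : 32 ≤ ∑ i, y i ^ 2 := by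
  classical
  obtain ⟨i, hi⟩ := Function.ne_iff.mp hne
  -- a single nonzero entry could not sum to zero
  obtain ⟨j, hji, hj⟩ : ∃ j, j ≠ i ∧ y j ≠ 0 := by
    by_contra! h
    exact hi (by rwa [Finset.sum_eq_single i (fun j _ => h j) (by simp)] at hsum)
  calc (32 : ℤ) ≤ y j ^ 2 + y i ^ 2 := by
        linarith [sixteen_le_sq_of_four_dvd (hy i) hi, sixteen_le_sq_of_four_dvd (hy j) hj]
    _ = ∑ k ∈ {j, i}, y k ^ 2 := (Finset.sum_pair (f := fun k => y k ^ 2) hji).symm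
    _ ≤ ∑ k, y k ^ 2 :=
        Finset.sum_le_sum_of_subset_of_nonneg (Finset.subset_univ _) fun k _ _ => sq_nonneg _

theorem min_le_sum_sq_of_modEq_of_sum_eq_zero {y : ι → ℤ} {c : ℤ} (hy : ∀ i, y i ≡ c [ZMOD 4])
    (hsum : ∑ i, y i = 0) (hne : y ≠ 0) : min (3 * (Fintype.card ι : ℤ)) 32 ≤ ∑ i, y i ^ 2 := by
  have hr : ∀ i, y i ≡ c % 4 [ZMOD 4] := fun i => (hy i).trans (Int.mod_modEq c 4).symm
  have hr0 : 0 ≤ c % 4 := Int.emod_nonneg c (by norm_num)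
  have hr4 : c % 4 < 4 := Int.emod_lt_of_pos c (by norm_num)
  generalize c % 4 = r at hr hr0 hr4
  interval_cases r
  · exact (min_le_right _ _).trans <|
      thirty_two_le_sum_sq_of_four_dvd (fun i => Int.modEq_zero_iff_dvd.mp (hr i)) hsum hne
  · exact (min_le_left _ _).trans (three_mul_card_le_sum_sq_of_modEq_one hr hsum)
  · exact (min_le_left _ _).trans <|
      (by linarith [Fintype.card ι] : 3 * (Fintype.card ι : ℤ) ≤ 4 * Fintype.card ι).trans
        (four_mul_card_le_sum_sq_of_modEq_two hr)
  · have hneg : ∀ i, -y i ≡ 1 [ZMOD 4] := fun i => ((hr i).neg).trans (by decide)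
    simpa using (min_le_left _ _).trans <|
      three_mul_card_le_sum_sq_of_modEq_one hneg (by simp [hsum])

end Int

namespace Matrix

variable {m n R : Type*} [Fintype n]

theorem mulVec_modEq_of_forall_modEq {A : Matrix m n ℤ} {a N : ℤ}
    (hA : ∀ i j, A i j ≡ a [ZMOD N]) (x : n → ℤ) (i : m) :
    (A *ᵥ x) i ≡ a * ∑ j, x j [ZMOD N] := by
  rw [Finset.mul_sum]
  exact Int.ModEq.sum fun j _ => (hA i j).mul_right _

theorem sum_mulVec_eq_zero [Fintype m] [NonUnitalNonAssocSemiring R] {A : Matrix m n R}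
    (hA : ∀ j, ∑ i, A i j = 0) (x : n → R) : ∑ i, (A *ᵥ x) i = 0 := by
  simp only [mulVec, dotProduct]
  rw [Finset.sum_comm]
  simp [← Finset.sum_mul, hA]

end Matrix

/-- The basis matrix B̃ of the (7,28)-lattice: for every nonzero integer
vector x, ‖B̃x‖² ≥ 24, i.e. the rescaled lattice has minimal distance 1. -/
theorem stmt17
    (Bt : Matrix (Fin 8) (Fin 7) ℤ)
    (hBt : Bt = !![-3,-3,-3,-3,-3,-3,1;
                   -3,1,1,1,1,1,1;
                   1,-3,1,1,1,1,-3;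
                   1,1,-3,1,1,1,1;
                   1,1,1,-3,1,1,1;
                   1,1,1,1,-3,1,-3;
                   1,1,1,1,1,-3,1;
                   1,1,1,1,1,1,1])
    (x : Fin 7 → ℤ) (hx : x ≠ 0) :
    24 ≤ ∑ i, (Bt.mulVec x i) ^ 2 := by
  have hmod : ∀ i j, Bt i j ≡ 1 [ZMOD 4] := by rw [hBt]; unfold Int.ModEq; decide
  have hcol : ∀ j, ∑ i, Bt i j = 0 := by rw [hBt]; decide
  have hinj : Bt *ᵥ x ≠ 0 := by
    contrapose! hx
    have h : ∀ i, (Bt *ᵥ x) i = 0 := congrFun hx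
    simp [hBt, mulVec, dotProduct, Fin.sum_univ_succ, Fin.forall_fin_succ] at h
    funext j
    fin_cases j <;> simp <;> omega
  simpa using Int.min_le_sum_sq_of_modEq_of_sum_eq_zero (mulVec_modEq_of_forall_modEq hmod x)
    (sum_mulVec_eq_zero hcol x) hinj
end

section
/- Let p = (1+√5)/2 and let G be the 3×6 matrix (1/√(1+p²)) · [[0,0,1,−1,p,p],[1,−1,p,p,0,0],[p,p,0,0,1,−1]]. Then the integer span of the columns of G is not a discrete subgroup of ℝ³: there exists a sequence of nonzero integer linear combinations of the columns of G converging to 0. -/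
open Matrix BigOperators

private lemma vec6_app {α : Type*} (x0 x1 x2 x3 x4 x5 : α) :
    (![x0,x1,x2,x3,x4,x5] : Fin 6 → α) 0 = x0 ∧ (![x0,x1,x2,x3,x4,x5] : Fin 6 → α) 1 = x1 ∧
    (![x0,x1,x2,x3,x4,x5] : Fin 6 → α) 2 = x2 ∧ (![x0,x1,x2,x3,x4,x5] : Fin 6 → α) 3 = x3 ∧
    (![x0,x1,x2,x3,x4,x5] : Fin 6 → α) 4 = x4 ∧ (![x0,x1,x2,x3,x4,x5] : Fin 6 → α) 5 = x5 :=
  ⟨rfl, rfl, rfl, rfl, rfl, rfl⟩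

/-- The integer span of the icosahedral (3,6) frame is not discrete:
there are nonzero integer combinations of the frame vectors of arbitrarily
small norm. -/
theorem stmt19 (p : ℝ) (hp : p = (1 + Real.sqrt 5) / 2)
    (G : Matrix (Fin 3) (Fin 6) ℝ)
    (hG : G = (Real.sqrt (1 + p ^ 2))⁻¹ •
      !![0, 0, 1, -1, p, p;
         1, -1, p, p, 0, 0;
         p, p, 0, 0, 1, -1]) :
    ∀ ε > (0 : ℝ), ∃ c : Fin 6 → ℤ,
      G.mulVec (fun j => (c j : ℝ)) ≠ 0 ∧
      ∑ i, (G.mulVec (fun j => (c j : ℝ)) i) ^ 2 < ε := by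
  have h5 : Real.sqrt 5 ^ 2 = 5 := Real.sq_sqrt (by norm_num)
  have h5gt : (1:ℝ) < Real.sqrt 5 := by nlinarith [Real.sqrt_nonneg 5]
  obtain ⟨q, hq⟩ : ∃ q : ℝ, q = (1 - Real.sqrt 5) / 2 := ⟨_, rfl⟩
  have hpq : q = 1 - p := by rw [hq, hp]; ring
  have hp2 : p ^ 2 = p + 1 := by rw [hp]; nlinarith
  have hqneg : q < 0 := by rw [hq]; linarith
  have hq2pos : 0 < q ^ 2 := by nlinarith
  have hq2lt : q ^ 2 < 1 := by rw [hq]; nlinarith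
  have key : ∀ n : ℕ, ∃ a b : ℤ, (a : ℝ) + b * p = q ^ n := by
    intro n
    induction n with
    | zero => exact ⟨1, 0, by norm_num⟩
    | succ n ih =>
      obtain ⟨a, b, hab⟩ := ih
      refine ⟨a - b, -a, ?_⟩
      push_cast
      rw [pow_succ, ← hab, hpq]
      linear_combination (b : ℝ) * hp2
  obtain ⟨s, hs⟩ : ∃ s : ℝ, s = Real.sqrt (1 + p ^ 2) := ⟨_, rfl⟩
  rw [← hs] at hG
  have hspos : 0 < s := by rw [hs]; exact Real.sqrt_pos.mpr (by nlinarith)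
  have hs2 : s ^ 2 = 1 + p ^ 2 := by rw [hs]; exact Real.sq_sqrt (by nlinarith)
  intro ε hε
  obtain ⟨n, hn⟩ := exists_pow_lt_of_lt_one
    (show (0:ℝ) < ε * s ^ 2 / 4 by positivity) hq2lt
  obtain ⟨a, b, hab⟩ := key n
  have hM : (!![0, 0, 1, -1, p, p;
         1, -1, p, p, 0, 0;
         p, p, 0, 0, 1, -1]).mulVec (fun j => ((![0, 0, a, -a, b, b] : Fin 6 → ℤ) j : ℝ)) =
      ![2 * q ^ n, 0, 0] := by
    funext i
    fin_cases i <;>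
    · simp [Matrix.mulVec, dotProduct, Fin.sum_univ_six,
        (vec6_app (0:ℤ) 0 a (-a) b b).2.2.2.2.2,
        (vec6_app (0:ℝ) 0 1 (-1) p p).2.2.2.2.2,
        (vec6_app (1:ℝ) (-1) p p 0 0).2.2.2.2.2,
        (vec6_app p p (0:ℝ) 0 1 (-1)).2.2.2.2.2]
      try (rw [← hab]; push_cast; ring)
  have hv0 : G.mulVec (fun j => ((![0, 0, a, -a, b, b] : Fin 6 → ℤ) j : ℝ)) =
      ![s⁻¹ * (2 * q ^ n), 0, 0] := by
    rw [hG, Matrix.smul_mulVec, hM]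
    funext i
    fin_cases i <;> simp
  refine ⟨![0, 0, a, -a, b, b], ?_, ?_⟩
  · intro h0
    have h00 := congrFun (hv0 ▸ h0) 0
    simp only [Matrix.cons_val_zero, Pi.zero_apply] at h00
    have hqn : q ^ n ≠ 0 := pow_ne_zero n (ne_of_lt hqneg)
    have hsinv : s⁻¹ ≠ 0 := inv_ne_zero (ne_of_gt hspos)
    rcases mul_eq_zero.mp h00 with h | h
    · exact hsinv h
    · exact hqn (by linarith)
  · rw [hv0, Fin.sum_univ_three]
    simp only [Matrix.cons_val_zero, Matrix.cons_val_one, Matrix.head_cons,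
      Matrix.cons_val_two, Matrix.tail_cons]
    have h1 : (q ^ n) ^ 2 = (q ^ 2) ^ n := by
      rw [← pow_mul, ← pow_mul, Nat.mul_comm]
    have hs2pos : 0 < s ^ 2 := by positivity
    have hne : s ≠ 0 := ne_of_gt hspos
    have heq : (s⁻¹ * (2 * q ^ n)) ^ 2 + 0 ^ 2 + 0 ^ 2 = 4 * (q ^ 2) ^ n / s ^ 2 := by
      rw [← h1]; field_simp; ring
    rw [heq, div_lt_iff₀ hs2pos]
    nlinarith [hn]
end
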